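/- arXiv:1904.05147 — 8 statements merged into one kernel-verified Lean document; each statement's English description precedes it below -/
import Mathlib

section
/- Comparison principle for the DPP: if u and ū are bounded Borel functions on Ω_ε that both satisfy the DPP at every point of Ω, and ū ≥ u on Γ_ε, then ū ≥ u on all of Ω_ε. -/
/-!
Put `w = u - ū` and `M = sup_Ω w`, and suppose `M > 0`. Subtracting the two DPPs and using
`α + β = 1` and `w ≤ M` on `Ω_ε` shows that `g = M - w ≥ 0` satisfies the sub-mean-value
inequality `β ⨍_{B_ε(x)} g ≤ g(x)` at every `x ∈ Ω`, so `g(x) = 0` forces `g = 0` a.e. on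
`B_ε(x)`. Points of `Ω` where `g → 0` accumulate at some `x₀ ∈ Ω̄`, and `g` vanishes a.e. on
`B_{ε/2}(x₀)`; as `Ω̄` is connected, this a.e. vanishing spreads to every half-ball centred in
`Ω̄`. But a half-ball centred on `∂Ω` contains an open piece of `Γ_ε`, where `g ≥ M > 0`.
-/

open MeasureTheory Metric Set Filter Topology Bornology

theorem IsPreconnected.inter_frontier_nonempty {X : Type*} [TopologicalSpace X] {s t : Set X}
    (hs : IsPreconnected s) (ht : IsOpen t) (hst : (s ∩ t).Nonempty) (hst' : ¬s ⊆ t) :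
    (s ∩ frontier t).Nonempty := by
  by_contra h
  refine hst' (hs.subset_of_closure_inter_subset ht hst fun y ⟨hyc, hys⟩ => ?_)
  rw [closure_eq_self_union_frontier] at hyc
  exact hyc.resolve_right fun hyf => h ⟨y, hys, hyf⟩

theorem IsOpen.exists_mem_of_ae_restrict {X : Type*} [TopologicalSpace X] [MeasurableSpace X]
    [OpensMeasurableSpace X] {μ : Measure X} [μ.IsOpenPosMeasure] {p : X → Prop} {s U : Set X}
    (hU : IsOpen U) (hne : U.Nonempty) (hUs : U ⊆ s) (h : ∀ᵐ z ∂μ.restrict s, p z) :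
    ∃ z ∈ U, p z := by
  have : (ae (μ.restrict U)).NeBot := ae_restrict_neBot.2 (hU.measure_ne_zero μ hne)
  obtain ⟨z, hz, hzU⟩ :=
    ((ae_restrict_of_ae_restrict_of_subset hUs h).and (ae_restrict_mem hU.measurableSet)).exists
  exact ⟨z, hzU, hz⟩

theorem exists_seq_mem_tendsto_sSup_image {X : Type*} {s : Set X} {f : X → ℝ}
    (hs : s.Nonempty) (hf : BddAbove (f '' s)) :
    ∃ y : ℕ → X, (∀ k, y k ∈ s) ∧ Tendsto (f ∘ y) atTop (𝓝 (sSup (f '' s))) := by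
  obtain ⟨a, -, ha, has⟩ := exists_seq_tendsto_sSup (hs.image f) hf
  choose y hys hya using has
  exact ⟨y, hys, by simpa only [Function.comp_def, hya] using ha⟩

theorem csSup_image_le_csSup_image_add {X : Type*} {s : Set X} {f g : X → ℝ} {c : ℝ}
    (hs : s.Nonempty) (hg : BddAbove (g '' s)) (hfg : ∀ y ∈ s, f y ≤ g y + c) :
    sSup (f '' s) ≤ sSup (g '' s) + c :=
  csSup_le (hs.image f) <| forall_mem_image.2 fun y hy =>
    (hfg y hy).trans (add_le_add_left (le_csSup hg (mem_image_of_mem g hy)) c)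

theorem csInf_image_le_csInf_image_add {X : Type*} {s : Set X} {f g : X → ℝ} {c : ℝ}
    (hs : s.Nonempty) (hf : BddBelow (f '' s)) (hfg : ∀ y ∈ s, f y ≤ g y + c) :
    sInf (f '' s) ≤ sInf (g '' s) + c :=
  sub_le_iff_le_add.1 <| le_csInf (hs.image g) <| forall_mem_image.2 fun y hy =>
    sub_le_iff_le_add.2 ((csInf_le hf (mem_image_of_mem f hy)).trans (hfg y hy))

theorem isBounded_image_of_abs_le {X : Type*} {f : X → ℝ} {s : Set X} {K : ℝ}
    (hK : ∀ z ∈ s, |f z| ≤ K) : IsBounded (f '' s) :=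
  isBounded_iff_forall_norm_le.2 ⟨K, forall_mem_image.2 hK⟩

theorem integrableOn_ball_of_abs_le {X : Type*} [PseudoMetricSpace X] [ProperSpace X]
    [MeasurableSpace X] [OpensMeasurableSpace X] {μ : Measure X} [IsFiniteMeasureOnCompacts μ]
    {f : X → ℝ} {x : X} {r K : ℝ} (hf : AEStronglyMeasurable f μ)
    (hK : ∀ z ∈ ball x r, |f z| ≤ K) : IntegrableOn f (ball x r) μ :=
  Measure.integrableOn_of_bounded measure_ball_lt_top.ne hf
    (ae_restrict_of_forall_mem measurableSet_ball hK)

section OuterLayer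

variable {X : Type*} [PseudoMetricSpace X] {Ω : Set X} {ε : ℝ}

def outerLayer (Ω : Set X) (ε : ℝ) : Set X := {x | x ∉ Ω ∧ infDist x (frontier Ω) ≤ ε}

theorem ball_diff_closure_subset_outerLayer {x : X} (hx : x ∈ frontier Ω) {r : ℝ}
    (hr : r ≤ ε) : ball x r \ closure Ω ⊆ outerLayer Ω ε := fun _ ⟨hzx, hzΩ⟩ =>
  ⟨fun h => hzΩ (subset_closure h),
    (infDist_le_dist_of_mem hx).trans ((mem_ball.1 hzx).le.trans hr)⟩

end OuterLayer

section OuterLayerNormed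

variable {E : Type*} [NormedAddCommGroup E] [NormedSpace ℝ E] {Ω : Set E} {ε : ℝ}

theorem infDist_frontier_le_dist (hΩ : IsOpen Ω) {x z : E} (hx : x ∈ Ω) (hz : z ∉ Ω) :
    infDist z (frontier Ω) ≤ dist z x := by
  obtain ⟨y, hy, hyΩ⟩ := (convex_segment x z).isPreconnected.inter_frontier_nonempty hΩ
    ⟨x, left_mem_segment ℝ x z, hx⟩ fun h => hz (h (right_mem_segment ℝ x z))
  have : y ∈ closedBall z (dist z x) := (convex_closedBall z _).segment_subset
    (by simp [dist_comm]) (mem_closedBall_self dist_nonneg) hy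
  exact (infDist_le_dist_of_mem hyΩ).trans ((dist_comm z y).trans_le this)

theorem ball_subset_union_outerLayer (hΩ : IsOpen Ω) {x : E} (hx : x ∈ Ω) :
    ball x ε ⊆ Ω ∪ outerLayer Ω ε := by
  intro z hz
  by_cases hzΩ : z ∈ Ω
  · exact Or.inl hzΩ
  · exact Or.inr ⟨hzΩ, (infDist_frontier_le_dist hΩ hx hzΩ).trans (mem_ball.1 hz).le⟩

theorem exists_mem_frontier_ball_diff_closure_nonempty [Nontrivial E] (hne : Ω.Nonempty)
    (hb : IsBounded Ω) {r : ℝ} (hr : 0 < r) :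
    ∃ x ∈ frontier Ω, (ball x r \ closure Ω).Nonempty := by
  have hcl : closure Ω ≠ univ := fun h => NormedSpace.unbounded_univ ℝ E (h ▸ hb.closure)
  obtain ⟨x, hx⟩ := nonempty_frontier_iff.2 ⟨hne.closure, hcl⟩
  have hx' : x ∈ closure (closure Ω)ᶜ := frontier_subset_closure (by rwa [frontier_compl])
  obtain ⟨z, hz, hxz⟩ := Metric.mem_closure_iff.1 hx' r hr
  exact ⟨x, frontier_closure_subset hx, z, mem_ball'.2 hxz, hz⟩

end OuterLayerNormed

section SupInfOverBalls

variable {X : Type*} [PseudoMetricSpace X] {f g : X → ℝ} {x : X} {ε c : ℝ}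

/- As `sSup ∅ = 0`, `t ↦ sSup (f '' ball x t)` need not be monotone at `t = 0`; adding `f x`
to the set repairs this without changing the function on `(0, ε]`. -/
theorem intervalIntegrable_sSup_image_ball (hε : 0 ≤ ε) (hf : BddAbove (f '' ball x ε)) :
    IntervalIntegrable (fun t => sSup (f '' ball x t)) volume 0 ε := by
  refine IntervalIntegrable.congr (f := fun t => sSup (insert (f x) (f '' ball x t)))
    (fun t ht => ?_) (MonotoneOn.intervalIntegrable fun s _ t ht hst => ?_)
  · rw [uIoc_of_le hε] at ht
    simp only [insert_eq_of_mem (mem_image_of_mem f (mem_ball_self ht.1))]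
  · rw [uIcc_of_le hε] at ht
    exact csSup_le_csSup ((hf.mono (image_mono (ball_subset_ball ht.2))).insert _)
      (insert_nonempty _ _) (insert_subset_insert (image_mono (ball_subset_ball hst)))

theorem intervalIntegrable_sInf_image_ball (hε : 0 ≤ ε) (hf : BddBelow (f '' ball x ε)) :
    IntervalIntegrable (fun t => sInf (f '' ball x t)) volume 0 ε := by
  refine IntervalIntegrable.congr (f := fun t => sInf (insert (f x) (f '' ball x t)))
    (fun t ht => ?_) (AntitoneOn.intervalIntegrable fun s _ t ht hst => ?_)
  · rw [uIoc_of_le hε] at ht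
    simp only [insert_eq_of_mem (mem_image_of_mem f (mem_ball_self ht.1))]
  · rw [uIcc_of_le hε] at ht
    exact csInf_le_csInf ((hf.mono (image_mono (ball_subset_ball ht.2))).insert _)
      (insert_nonempty _ _) (insert_subset_insert (image_mono (ball_subset_ball hst)))

theorem intervalIntegrable_sSup_add_sInf_image_ball (hε : 0 ≤ ε)
    (hf : IsBounded (f '' ball x ε)) :
    IntervalIntegrable (fun t => sSup (f '' ball x t) + sInf (f '' ball x t)) volume 0 ε :=
  (intervalIntegrable_sSup_image_ball hε hf.bddAbove).add
    (intervalIntegrable_sInf_image_ball hε hf.bddBelow)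

theorem integral_sSup_add_sInf_image_ball_le (hε : 0 ≤ ε) (hf : IsBounded (f '' ball x ε))
    (hg : IsBounded (g '' ball x ε)) (hfg : ∀ y ∈ ball x ε, f y ≤ g y + c) :
    ∫ t in (0 : ℝ)..ε, (sSup (f '' ball x t) + sInf (f '' ball x t)) ≤
      (∫ t in (0 : ℝ)..ε, (sSup (g '' ball x t) + sInf (g '' ball x t))) + 2 * c * ε := by
  have hgi := intervalIntegrable_sSup_add_sInf_image_ball hε hg
  calc _ ≤ ∫ t in (0 : ℝ)..ε, (sSup (g '' ball x t) + sInf (g '' ball x t) + 2 * c) :=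
        intervalIntegral.integral_mono_on_of_le_Ioo hε
          (intervalIntegrable_sSup_add_sInf_image_ball hε hf) (hgi.add intervalIntegrable_const)
          fun t ht => ?_
    _ = _ := by
      rw [intervalIntegral.integral_add hgi intervalIntegrable_const,
        intervalIntegral.integral_const, smul_eq_mul]
      ring
  have hsub : ball x t ⊆ ball x ε := ball_subset_ball ht.2.le
  have hne : (ball x t).Nonempty := nonempty_ball.2 ht.1
  have hsup := csSup_image_le_csSup_image_add hne ((hg.subset (image_mono hsub)).bddAbove)
    fun y hy => hfg y (hsub hy)
  have hinf := csInf_image_le_csInf_image_add hne ((hf.subset (image_mono hsub)).bddBelow)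
    fun y hy => hfg y (hsub hy)
  linarith

end SupInfOverBalls

section DPP

variable {X : Type*} [PseudoMetricSpace X] [MeasurableSpace X]

noncomputable def dppOperator (μ : Measure X) (α β ε : ℝ) (f : X → ℝ) (x : X) : ℝ :=
  α / (2 * ε) * (∫ t in (0 : ℝ)..ε, (sSup (f '' ball x t) + sInf (f '' ball x t))) +
    β * ⨍ z in ball x ε, f z ∂μ

theorem dppOperator_sub_le {μ : Measure X} {α β ε c : ℝ} {f g : X → ℝ} {x : X} (hα : 0 ≤ α)
    (hε : 0 < ε) (hf : IsBounded (f '' ball x ε)) (hg : IsBounded (g '' ball x ε))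
    (hfi : IntegrableOn f (ball x ε) μ) (hgi : IntegrableOn g (ball x ε) μ)
    (hfg : ∀ y ∈ ball x ε, f y ≤ g y + c) :
    dppOperator μ α β ε f x - dppOperator μ α β ε g x ≤
      α * c + β * ⨍ z in ball x ε, (f z - g z) ∂μ := by
  have hI := mul_le_mul_of_nonneg_left (integral_sSup_add_sInf_image_ball_le hε.le hf hg hfg)
    (by positivity : 0 ≤ α / (2 * ε))
  have hc : α / (2 * ε) * (2 * c * ε) = α * c := by field_simp
  rw [mul_add, hc] at hI
  have havg : ⨍ z in ball x ε, (f z - g z) ∂μ =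
      (⨍ z in ball x ε, f z ∂μ) - ⨍ z in ball x ε, g z ∂μ := by
    simp only [setAverage_eq, integral_sub hfi hgi, smul_sub]
  rw [havg, mul_sub]
  unfold dppOperator
  linarith

end DPP

theorem setIntegral_sub_le_of_dppOperator_eq {E : Type*} [NormedAddCommGroup E]
    [NormedSpace ℝ E] [MeasurableSpace E] [BorelSpace E] [FiniteDimensional ℝ E] {μ : Measure E}
    [μ.IsAddHaarMeasure] {α β ε M : ℝ} {u v : E → ℝ} {x : E} (hα : 0 ≤ α) (hβ : 0 < β)
    (hαβ : α + β = 1) (hε : 0 < ε) (hu : u x = dppOperator μ α β ε u x)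
    (hv : v x = dppOperator μ α β ε v x) (hub : IsBounded (u '' ball x ε))
    (hvb : IsBounded (v '' ball x ε)) (hui : IntegrableOn u (ball x ε) μ)
    (hvi : IntegrableOn v (ball x ε) μ) (huv : ∀ y ∈ ball x ε, u y ≤ v y + M) :
    ∫ z in ball x ε, (M - (u z - v z)) ∂μ ≤ μ.real (ball 0 ε) / β * (M - (u x - v x)) := by
  have hdpp := dppOperator_sub_le (β := β) hα hε hub hvb hui hvi huv
  rw [← hu, ← hv, setAverage_eq, smul_eq_mul, Measure.addHaar_real_ball_center] at hdpp
  have hV : 0 < μ.real (ball (0 : E) ε) :=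
    ENNReal.toReal_pos (measure_ball_pos μ 0 hε).ne' measure_ball_lt_top.ne
  rw [integral_sub (integrableOn_const (C := M) measure_ball_lt_top.ne)
      (g := fun z => u z - v z) (hui.sub hvi), setIntegral_const, smul_eq_mul,
    Measure.addHaar_real_ball_center, div_mul_eq_mul_div, le_div_iff₀ hβ]
  have hI : μ.real (ball (0 : E) ε) * (β * ((μ.real (ball (0 : E) ε))⁻¹ *
      ∫ z in ball x ε, (u z - v z) ∂μ)) = β * ∫ z in ball x ε, (u z - v z) ∂μ := by
    field_simp
  have := mul_le_mul_of_nonneg_left hdpp hV.le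
  rw [mul_add, hI, eq_sub_of_add_eq hαβ] at this
  linarith

section StrongMinimumPrinciple

variable {X : Type*} [PseudoMetricSpace X] [MeasurableSpace X] [OpensMeasurableSpace X]
  {μ : Measure X} {Ω : Set X} {g : X → ℝ} {ε C : ℝ}

theorem ae_restrict_ball_eq_zero_of_eq_zero {y : X} (hg0 : ∀ z ∈ ball y ε, 0 ≤ g z)
    (hgi : IntegrableOn g (ball y ε) μ) (hmean : ∫ z in ball y ε, g z ∂μ ≤ C * g y)
    (hy : g y = 0) : g =ᵐ[μ.restrict (ball y ε)] 0 := by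
  refine (setIntegral_eq_zero_iff_of_nonneg_ae
    (ae_restrict_of_forall_mem measurableSet_ball hg0) hgi).1
    (le_antisymm ?_ (setIntegral_nonneg measurableSet_ball hg0))
  simpa [hy] using hmean

theorem ae_restrict_ball_half_eq_zero_of_dist_lt [μ.IsOpenPosMeasure] (hΩ : IsOpen Ω)
    (hε : 0 < ε) (hg0 : ∀ y ∈ Ω, ∀ z ∈ ball y ε, 0 ≤ g z)
    (hgi : ∀ y ∈ Ω, IntegrableOn g (ball y ε) μ)
    (hmean : ∀ y ∈ Ω, ∫ z in ball y ε, g z ∂μ ≤ C * g y) {x x' : X} (hx' : x' ∈ closure Ω)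
    (hgx' : g =ᵐ[μ.restrict (ball x' (ε / 2))] 0) (hxx' : dist x x' < ε / 4) :
    g =ᵐ[μ.restrict (ball x (ε / 2))] 0 := by
  obtain ⟨b, hbΩ, hb⟩ := Metric.mem_closure_iff.1 hx' (ε / 4) (by positivity)
  obtain ⟨y, ⟨hyΩ, hyx'⟩, hy⟩ := (hΩ.inter isOpen_ball).exists_mem_of_ae_restrict
    ⟨b, hbΩ, mem_ball'.2 hb⟩ (inter_subset_right.trans (ball_subset_ball (by linarith))) hgx'
  refine ae_restrict_of_ae_restrict_of_subset (ball_subset_ball' ?_)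
    (ae_restrict_ball_eq_zero_of_eq_zero (hg0 y hyΩ) (hgi y hyΩ) (hmean y hyΩ) hy)
  linarith [dist_triangle x x' y, mem_ball'.1 hyx']

theorem exists_ae_restrict_ball_half_eq_zero (hε : 0 < ε) (hΩc : IsCompact (closure Ω))
    (hg0 : ∀ y ∈ Ω, ∀ z ∈ ball y ε, 0 ≤ g z) (hgi : ∀ y ∈ Ω, IntegrableOn g (ball y ε) μ)
    (hmean : ∀ y ∈ Ω, ∫ z in ball y ε, g z ∂μ ≤ C * g y) {y : ℕ → X} (hyΩ : ∀ k, y k ∈ Ω)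
    (hgy : Tendsto (g ∘ y) atTop (𝓝 0)) :
    ∃ x ∈ closure Ω, g =ᵐ[μ.restrict (ball x (ε / 2))] 0 := by
  obtain ⟨x, hx, φ, hφ, hyx⟩ := hΩc.tendsto_subseq fun k => subset_closure (hyΩ k)
  have hnear : ∀ᶠ k in atTop, ball x (ε / 2) ⊆ ball (y (φ k)) ε :=
    (hyx.eventually (ball_mem_nhds x (half_pos hε))).mono
      fun k (hk : dist (y (φ k)) x < ε / 2) => ball_subset_ball' (by rw [dist_comm]; linarith)
  obtain ⟨k, hk⟩ := hnear.exists
  have hnn : ∀ z ∈ ball x (ε / 2), 0 ≤ g z := fun z hz => hg0 _ (hyΩ _) z (hk hz)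
  refine ⟨x, hx, (setIntegral_eq_zero_iff_of_nonneg_ae
    (ae_restrict_of_forall_mem measurableSet_ball hnn) ((hgi _ (hyΩ _)).mono_set hk)).1
    (le_antisymm ?_ (setIntegral_nonneg measurableSet_ball hnn))⟩
  have hlim : Tendsto (fun k => C * g (y (φ k))) atTop (𝓝 0) := by
    simpa using (hgy.comp hφ.tendsto_atTop).const_mul C
  refine ge_of_tendsto hlim (hnear.mono fun k hk => ?_)
  exact (setIntegral_mono_set (hgi _ (hyΩ _))
    (ae_restrict_of_forall_mem measurableSet_ball (hg0 _ (hyΩ _))) hk.eventuallyLE).trans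
    (hmean _ (hyΩ _))

theorem ae_restrict_ball_half_eq_zero_of_mem_closure [μ.IsOpenPosMeasure] (hΩ : IsOpen Ω)
    (hΩconn : IsPreconnected Ω) (hΩc : IsCompact (closure Ω)) (hε : 0 < ε)
    (hg0 : ∀ y ∈ Ω, ∀ z ∈ ball y ε, 0 ≤ g z) (hgi : ∀ y ∈ Ω, IntegrableOn g (ball y ε) μ)
    (hmean : ∀ y ∈ Ω, ∫ z in ball y ε, g z ∂μ ≤ C * g y) {y : ℕ → X} (hyΩ : ∀ k, y k ∈ Ω)
    (hgy : Tendsto (g ∘ y) atTop (𝓝 0)) {x : X} (hx : x ∈ closure Ω) :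
    g =ᵐ[μ.restrict (ball x (ε / 2))] 0 := by
  obtain ⟨x₀, hx₀, hgx₀⟩ := exists_ae_restrict_ball_half_eq_zero hε hΩc hg0 hgi hmean hyΩ hgy
  refine hΩconn.closure.induction₂' (fun a b => g =ᵐ[μ.restrict (ball a (ε / 2))] 0 →
      g =ᵐ[μ.restrict (ball b (ε / 2))] 0) (fun a ha => ?_)
    (fun _ _ _ _ _ _ hab hbc h => hbc (hab h)) hx₀ hx hgx₀
  filter_upwards [nhdsWithin_le_nhds (ball_mem_nhds a (by positivity : 0 < ε / 4)),
    self_mem_nhdsWithin] with b hb hbΩ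
  exact ⟨fun h => ae_restrict_ball_half_eq_zero_of_dist_lt hΩ hε hg0 hgi hmean ha h hb,
    fun h => ae_restrict_ball_half_eq_zero_of_dist_lt hΩ hε hg0 hgi hmean hbΩ h (mem_ball'.1 hb)⟩

end StrongMinimumPrinciple

theorem le_zero_of_setIntegral_ball_le {E : Type*} [NormedAddCommGroup E] [NormedSpace ℝ E]
    [Nontrivial E] [ProperSpace E] [MeasurableSpace E] [OpensMeasurableSpace E] {μ : Measure E}
    [μ.IsOpenPosMeasure] [IsFiniteMeasureOnCompacts μ] {Ω : Set E} {w : E → ℝ} {ε C : ℝ}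
    (hΩ : IsOpen Ω) (hΩconn : IsConnected Ω) (hΩb : IsBounded Ω) (hε : 0 < ε)
    (hwb : BddAbove (w '' Ω)) (hwi : ∀ x ∈ Ω, IntegrableOn w (ball x ε) μ)
    (hbdry : ∀ y ∈ outerLayer Ω ε, w y ≤ 0)
    (hmean : ∀ M, (∀ y ∈ Ω ∪ outerLayer Ω ε, w y ≤ M) →
      ∀ x ∈ Ω, ∫ z in ball x ε, (M - w z) ∂μ ≤ C * (M - w x)) :
    ∀ x ∈ Ω, w x ≤ 0 := by
  obtain ⟨y, hyΩ, hy⟩ := exists_seq_mem_tendsto_sSup_image hΩconn.nonempty hwb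
  set M := sSup (w '' Ω)
  have hwΩ : ∀ x ∈ Ω, w x ≤ M := fun x hx => le_csSup hwb (mem_image_of_mem w hx)
  suffices hM : M ≤ 0 from fun x hx => (hwΩ x hx).trans hM
  by_contra! hM
  have hwM : ∀ y ∈ Ω ∪ outerLayer Ω ε, w y ≤ M := fun y hy =>
    hy.elim (hwΩ y) fun hy => (hbdry y hy).trans hM.le
  obtain ⟨f, hf, z, hz⟩ :=
    exists_mem_frontier_ball_diff_closure_nonempty hΩconn.nonempty hΩb (half_pos hε)
  have hzero := ae_restrict_ball_half_eq_zero_of_mem_closure (g := fun z => M - w z) hΩ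
    hΩconn.isPreconnected hΩb.isCompact_closure hε
    (fun x hx z hz => sub_nonneg.2 (hwM z (ball_subset_union_outerLayer hΩ hx hz)))
    (fun x hx => (integrableOn_const measure_ball_lt_top.ne).sub (hwi x hx)) (hmean M hwM)
    hyΩ (by simpa [Function.comp_def] using (tendsto_const_nhds (x := M)).sub hy)
    (frontier_subset_closure hf)
  obtain ⟨z, hzU, hz0⟩ := (isOpen_ball.sdiff isClosed_closure).exists_mem_of_ae_restrict
    ⟨z, hz⟩ sdiff_subset hzero
  have hz0 : M - w z = 0 := hz0
  linarith [hbdry z (ball_diff_closure_subset_outerLayer hf (half_le_self hε.le) hzU)]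

/-- **Comparison principle for the DPP.** If `u` and `ū` are bounded Borel functions on
`Ω_ε` both satisfying the DPP at every point of `Ω`, and `ū ≥ u` on `Γ_ε`, then `ū ≥ u`
on all of `Ω_ε = Ω ∪ Γ_ε`. -/
theorem dpp_comparison (n : ℕ) (hn : 2 ≤ n) (p : ℝ) (hp : 2 < p)
    (Ω : Set (EuclideanSpace ℝ (Fin n)))
    (hΩopen : IsOpen Ω) (hΩconn : IsConnected Ω) (hΩbdd : Bornology.IsBounded Ω)
    (ε : ℝ) (hε : ε ∈ Set.Ioo (0 : ℝ) 1)
    (u ubar : EuclideanSpace ℝ (Fin n) → ℝ)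
    (humeas : Measurable u) (hubarmeas : Measurable ubar)
    (hubdd : ∃ M, ∀ x ∈ Ω ∪ {x | x ∉ Ω ∧ Metric.infDist x (frontier Ω) ≤ ε}, |u x| ≤ M)
    (hubarbdd : ∃ M, ∀ x ∈ Ω ∪ {x | x ∉ Ω ∧ Metric.infDist x (frontier Ω) ≤ ε}, |ubar x| ≤ M)
    (hudpp : ∀ x ∈ Ω, u x =
        ((p - 2) / (n + p)) / (2 * ε) *
            (∫ t in (0 : ℝ)..ε, (sSup (u '' Metric.ball x t) + sInf (u '' Metric.ball x t)))
          + ((n + 2) / (n + p)) * ⨍ z in Metric.ball x ε, u z)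
    (hubardpp : ∀ x ∈ Ω, ubar x =
        ((p - 2) / (n + p)) / (2 * ε) *
            (∫ t in (0 : ℝ)..ε, (sSup (ubar '' Metric.ball x t) + sInf (ubar '' Metric.ball x t)))
          + ((n + 2) / (n + p)) * ⨍ z in Metric.ball x ε, ubar z)
    (hbdry : ∀ x ∈ {x | x ∉ Ω ∧ Metric.infDist x (frontier Ω) ≤ ε}, u x ≤ ubar x) :
    ∀ x ∈ Ω ∪ {x | x ∉ Ω ∧ Metric.infDist x (frontier Ω) ≤ ε}, u x ≤ ubar x := by
  obtain ⟨hε0, -⟩ := hε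
  have : Nonempty (Fin n) := ⟨⟨0, by omega⟩⟩
  obtain ⟨K, hK⟩ := hubdd
  obtain ⟨K', hK'⟩ := hubarbdd
  have hball : ∀ x ∈ Ω, ball x ε ⊆ Ω ∪ outerLayer Ω ε := fun x hx =>
    ball_subset_union_outerLayer hΩopen hx
  have hui : ∀ x ∈ Ω, IntegrableOn u (ball x ε) := fun x hx =>
    integrableOn_ball_of_abs_le humeas.aestronglyMeasurable fun y hy => hK y (hball x hx hy)
  have hvi : ∀ x ∈ Ω, IntegrableOn ubar (ball x ε) := fun x hx =>
    integrableOn_ball_of_abs_le hubarmeas.aestronglyMeasurable fun y hy => hK' y (hball x hx hy)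
  have hw := le_zero_of_setIntegral_ball_le (w := fun y => u y - ubar y) hΩopen hΩconn hΩbdd
    hε0    ⟨K + K', forall_mem_image.2 fun y hy => by
      linarith [abs_le.1 (hK y (Or.inl hy)), abs_le.1 (hK' y (Or.inl hy))]⟩
    (fun x hx => (hui x hx).sub (hvi x hx)) (fun y hy => sub_nonpos.2 (hbdry y hy))
    fun M hM x hx => setIntegral_sub_le_of_dppOperator_eq (by bound) (by positivity)
      (by field_simp; ring) hε0 (hudpp x hx) (hubardpp x hx)
      (isBounded_image_of_abs_le fun y hy => hK y (hball x hx hy))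
      (isBounded_image_of_abs_le fun y hy => hK' y (hball x hx hy)) (hui x hx) (hvi x hx)
      fun y hy => by linarith [hM y (hball x hx hy)]
  exact fun x hx => hx.elim (fun hx => sub_nonpos.1 (hw x hx)) (hbdry x)
end

section
/- Random walk with varying step size, hitting probability (Lemma C.1, first part): let ε ∈ (0,1), t₀ ∈ (0,1), let (X_j)_{j≥1} be an i.i.d. sequence of random variables each uniformly distributed on [−ε, ε], set t_j = t₀ + X₁ + … + X_j, and let τ = inf{ j ≥ 0 : t_j ∉ (0,1) }. Then τ < ∞ almost surely and P(t_τ ≤ 0) ≥ 1 − (t₀ + ε). -/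
/-!
Exit: split the steps into blocks of length `m` with `m * (ε / 2) ≥ 1`. With probability
`(1/4)^m` every step of a given block exceeds `ε / 2`, and then the walk cannot stay in `(0, 1)`
across that block. The blocks are independent, so by the second Borel–Cantelli lemma this happens
for some block almost surely.

Hitting probability: the walk is a martingale with steps bounded by `ε`, so the stopped walk
`t (min τ n)` has mean `t₀` and stays in `[-ε, 1 + ε]`; dominated convergence gives
`𝔼[t τ] = t₀`. Since `t τ ∈ [-ε, 0] ∪ [1, 1 + ε]`, we have `t τ ≥ 1 - (1 + ε) 𝟙{t τ ≤ 0}`, whence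
`t₀ ≥ 1 - (1 + ε) p ≥ 1 - p - ε` for `p = P(t τ ≤ 0)`.
-/

open MeasureTheory ProbabilityTheory Set Filter Function
open scoped ENNReal

namespace ProbabilityTheory

variable {Ω ι κ : Type*} {mΩ : MeasurableSpace Ω} {μ : Measure Ω}

theorem iIndep.iIndepSet_of_pairwise_disjoint {m : ι → MeasurableSpace Ω}
    (h_le : ∀ i, m i ≤ mΩ) (h_indep : iIndep m μ) {I : κ → Set ι}
    (hI : Pairwise (Disjoint on I)) {E : κ → Set Ω}
    (hE : ∀ k, MeasurableSet[⨆ i ∈ I k, m i] (E k)) : iIndepSet E μ := by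
  classical
  have := h_indep.isProbabilityMeasure
  refine (iIndepSet_iff_meas_biInter fun k => iSup₂_le (fun i _ => h_le i) _ (hE k)).2 fun s => ?_
  induction s using Finset.induction_on with
  | empty => simp
  | insert a s has ih =>
    have hdisj : Disjoint (I a) (⋃ k ∈ s, I k) :=
      disjoint_iUnion₂_right.2 fun k hk => hI (ne_of_mem_of_not_mem hk has).symm
    have hmono : ∀ k ∈ s, ⨆ i ∈ I k, m i ≤ ⨆ i ∈ ⋃ k ∈ s, I k, m i := fun k hk =>
      biSup_mono fun i hi => mem_biUnion hk hi
    have hmeas : MeasurableSet[⨆ i ∈ ⋃ k ∈ s, I k, m i] (⋂ k ∈ s, E k) :=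
      .biInter s.countable_toSet fun k hk => hmono k hk _ (hE k)
    rw [Finset.set_biInter_insert, Finset.prod_insert has, ← ih,
      (Indep_iff _ _ _).1 (indep_iSup_of_disjoint h_le h_indep hdisj) _ _ (hE a) hmeas]

theorem iIndepSet.ae_exists_mem {s : ℕ → Set Ω} (hsm : ∀ n, MeasurableSet (s n))
    (hs : iIndepSet s μ) (hsum : ∑' n, μ (s n) = ∞) : ∀ᵐ ω ∂μ, ∃ n, ω ∈ s n := by
  have := hs.isProbabilityMeasure
  have hlimsup : ∀ᵐ ω ∂μ, ω ∈ limsup s atTop := ae_iff.2 <|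
    (prob_compl_eq_zero_iff (MeasurableSet.measurableSet_limsup hsm)).2
      (measure_limsup_eq_one hsm hs hsum)
  filter_upwards [hlimsup] with ω hω using (mem_limsup_iff_frequently_mem.1 hω).exists

end ProbabilityTheory

namespace MeasureTheory.pdf.IsUniform

variable {Ω E : Type*} {mΩ : MeasurableSpace Ω} {μ : Measure Ω} [MeasurableSpace E]
  {ν : Measure E} {X : Ω → E} {s : Set E}

theorem ae_mem (hs : MeasurableSet s) (hns : ν s ≠ 0) (hnt : ν s ≠ ∞)
    (hu : IsUniform X s μ ν) : ∀ᵐ ω ∂μ, X ω ∈ s := by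
  rw [ae_iff, show {ω | X ω ∉ s} = X ⁻¹' sᶜ from rfl, hu.measure_preimage hns hnt hs.compl]
  simp

theorem integral_eq_zero_of_Icc_neg {X : Ω → ℝ} {c : ℝ} (hu : IsUniform X (Icc (-c) c) μ) :
    μ[X] = 0 := by
  rw [hu.integral_eq]
  rcases lt_or_ge c 0 with hc | hc
  · simp [Icc_eq_empty (by linarith : ¬-c ≤ c)]
  · rw [integral_Icc_eq_integral_Ioc, ← intervalIntegral.integral_of_le (by linarith),
      integral_id]
    ring

variable {X : Ω → ℝ} {c : ℝ}

theorem ae_abs_le (hc : 0 < c) (hu : IsUniform X (Icc (-c) c) μ) : ∀ᵐ ω ∂μ, |X ω| ≤ c := by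
  refine (hu.ae_mem measurableSet_Icc ?_ measure_Icc_lt_top.ne).mono fun ω => abs_le.2
  rw [Real.volume_Icc]
  exact (ENNReal.ofReal_pos.2 (by linarith)).ne'

theorem measure_preimage_Ioi_half (hc : 0 < c) (hu : IsUniform X (Icc (-c) c) μ) :
    μ (X ⁻¹' Ioi (c / 2)) = 1 / 4 := by
  have hinter : Icc (-c) c ∩ Ioi (c / 2) = Ioc (c / 2) c := by
    ext x
    simp only [mem_inter_iff, mem_Icc, mem_Ioi, mem_Ioc]
    constructor
    · rintro ⟨⟨-, hx⟩, hx'⟩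
      exact ⟨hx', hx⟩
    · rintro ⟨hx', hx⟩
      exact ⟨⟨by linarith, hx⟩, hx'⟩
  have hvol : volume (Icc (-c) c) = ENNReal.ofReal (2 * c) := by
    rw [Real.volume_Icc]
    ring_nf
  rw [hu.measure_preimage (by simp [hvol, hc]) measure_Icc_lt_top.ne measurableSet_Ioi, hinter,
    Real.volume_Ioc, hvol, ← ENNReal.ofReal_div_of_pos (by linarith),
    show (c - c / 2) / (2 * c) = 1 / 4 by field_simp; ring,
    ENNReal.ofReal_div_of_pos (by norm_num), ENNReal.ofReal_one, ENNReal.ofReal_ofNat]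

end MeasureTheory.pdf.IsUniform

section FirstExit

variable {β : Type*} {u : ℕ → β} {U : Set β} {n : ℕ}

/-- Junk value: `firstExit u U = 0` (as `sInf ∅ = 0`) when `u` never leaves `U`. -/
noncomputable def firstExit (u : ℕ → β) (U : Set β) : ℕ := sInf {j | u j ∉ U}

theorem apply_firstExit_notMem (h : ∃ j, u j ∉ U) : u (firstExit u U) ∉ U := Nat.sInf_mem h

theorem apply_mem_of_lt_firstExit (hn : n < firstExit u U) : u n ∈ U :=
  not_not.1 (Nat.notMem_of_lt_sInf hn)

theorem lt_firstExit_iff_and : n < firstExit u U ↔ (∀ j ≤ n, u j ∈ U) ∧ ∃ j, u j ∉ U :=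
  ⟨fun hn => ⟨fun _ hj => apply_mem_of_lt_firstExit (hj.trans_lt hn),
      Nat.nonempty_of_pos_sInf (n.zero_le.trans_lt hn)⟩,
    fun ⟨hU, h⟩ => lt_of_not_ge fun hle => apply_firstExit_notMem h (hU _ hle)⟩

theorem lt_firstExit_iff (h : ∃ j, u j ∉ U) : n < firstExit u U ↔ ∀ j ≤ n, u j ∈ U :=
  lt_firstExit_iff_and.trans (and_iff_left h)

theorem measurable_firstExit {Ω : Type*} [MeasurableSpace Ω] {u : ℕ → Ω → β}
    (hu : ∀ j, MeasurableSet {ω | u j ω ∈ U}) : Measurable fun ω => firstExit (u · ω) U := by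
  refine measurable_of_Ioi fun k => ?_
  have hpre : (fun ω => firstExit (u · ω) U) ⁻¹' Ioi k
      = (⋂ j ∈ Iic k, {ω | u j ω ∈ U}) ∩ ⋃ j, {ω | u j ω ∈ U}ᶜ := by
    ext ω
    simp [lt_firstExit_iff_and]
  rw [hpre]
  exact (MeasurableSet.biInter (to_countable _) fun j _ => hu j).inter
    (.iUnion fun j => (hu j).compl)

theorem apply_min_firstExit_eq_sum (u : ℕ → ℝ) (U : Set ℝ) (n : ℕ) :
    u (min (firstExit u U) n)
      = u 0 + ∑ i ∈ Finset.range n, if i < firstExit u U then u (i + 1) - u i else 0 := by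
  induction n with
  | zero => simp
  | succ n ih =>
    rw [Finset.sum_range_succ, ← add_assoc, ← ih]
    split_ifs with h
    · rw [min_eq_right (Nat.succ_le_of_lt h), min_eq_right h.le]
      ring
    · rw [min_eq_left (not_lt.1 h), min_eq_left ((not_lt.1 h).trans n.le_succ), add_zero]

theorem apply_mem_Icc_of_le_firstExit {u : ℕ → ℝ} {U : Set ℝ} {a b ε : ℝ} (h0 : u 0 ∈ U)
    (hU : U ⊆ Icc a b) (hstep : ∀ j, |u (j + 1) - u j| ≤ ε) (hn : n ≤ firstExit u U) :
    u n ∈ Icc (a - ε) (b + ε) := by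
  have hε : 0 ≤ ε := (abs_nonneg _).trans (hstep 0)
  cases n with
  | zero =>
    obtain ⟨ha, hb⟩ := hU h0
    constructor <;> linarith
  | succ n =>
    obtain ⟨ha, hb⟩ := hU (apply_mem_of_lt_firstExit hn)
    obtain ⟨hlo, hhi⟩ := abs_le.1 (hstep n)
    constructor <;> linarith

end FirstExit

theorem measurable_apply_index {Ω ι β : Type*} [MeasurableSpace Ω] [MeasurableSpace ι]
    [MeasurableSpace β] [Countable ι] [MeasurableSingletonClass ι] {u : ι → Ω → β}
    (hu : ∀ i, Measurable (u i)) {f : Ω → ι} (hf : Measurable f) :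
    Measurable fun ω => u (f ω) ω :=
  (measurable_from_prod_countable_left (f := fun p : Ω × ι => u p.2 p.1) hu).comp
    (measurable_id.prodMk hf)

section RandomWalk

variable {Ω : Type*} {mΩ : MeasurableSpace Ω} {P : Measure Ω} {X : ℕ → Ω → ℝ}
  {t : ℕ → Ω → ℝ} {t₀ : ℝ}

abbrev stepSigma (X : ℕ → Ω → ℝ) (S : Set ℕ) : MeasurableSpace Ω :=
  ⨆ i ∈ S, MeasurableSpace.comap (X i) inferInstance

theorem stepSigma_le (hX : ∀ i, Measurable (X i)) (S : Set ℕ) : stepSigma X S ≤ mΩ :=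
  iSup₂_le fun i _ => (hX i).comap_le

theorem measurable_stepSigma {S : Set ℕ} {i : ℕ} (hi : i ∈ S) : Measurable[stepSigma X S] (X i) :=
  (comap_measurable (X i)).mono (le_biSup (fun i => MeasurableSpace.comap (X i) _) hi) le_rfl

theorem indep_stepSigma (hX : ∀ i, Measurable (X i)) (hind : iIndepFun X P) {S T : Set ℕ}
    (hST : Disjoint S T) : Indep (stepSigma X S) (stepSigma X T) P :=
  indep_iSup_of_disjoint (fun i => (hX i).comap_le) hind.iIndep hST

variable (ht : ∀ j ω, t j ω = t₀ + ∑ i ∈ Finset.range j, X (i + 1) ω)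
include ht

theorem walk_add (n m : ℕ) (ω : Ω) :
    t (n + m) ω = t n ω + ∑ i ∈ Finset.range m, X (n + i + 1) ω := by
  rw [ht, ht, Finset.sum_range_add, add_assoc]

theorem walk_succ_sub (n : ℕ) (ω : Ω) : t (n + 1) ω - t n ω = X (n + 1) ω := by
  simp [walk_add ht n 1]

theorem measurable_walk_stepSigma {S : Set ℕ} {j : ℕ} (hS : Ioc 0 j ⊆ S) :
    Measurable[stepSigma X S] (t j) := by
  rw [show t j = fun ω => t₀ + ∑ i ∈ Finset.range j, X (i + 1) ω from funext (ht j)]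
  exact measurable_const.add <| Finset.measurable_sum _ fun i hi =>
    measurable_stepSigma (hS ⟨i.succ_pos, Finset.mem_range.1 hi⟩)

theorem measurable_walk (hX : ∀ i, Measurable (X i)) (j : ℕ) : Measurable (t j) :=
  (measurable_walk_stepSigma ht (subset_univ _)).mono (stepSigma_le hX univ) le_rfl

omit ht in
theorem pairwise_disjoint_Ioc_mul (m : ℕ) :
    Pairwise (Disjoint on fun k => Ioc (m * k) (m * k + m)) := by
  have hle : ∀ k l, k < l → m * k + m ≤ m * l := fun k l hkl => by
    simpa [mul_add] using Nat.mul_le_mul_left m (Nat.succ_le_of_lt hkl)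
  intro k l hkl
  rcases hkl.lt_or_gt with h | h
  · exact Ioc_disjoint_Ioc_of_le (hle k l h)
  · exact (Ioc_disjoint_Ioc_of_le (hle l k h)).symm

theorem ae_exists_walk_notMem_Ioo (hX : ∀ i, Measurable (X i)) (hind : iIndepFun X P)
    {δ : ℝ} (hδ : 0 < δ) {q : ℝ≥0∞} (hq : q ≠ 0) (hXδ : ∀ i, 1 ≤ i → q ≤ P (X i ⁻¹' Ioi δ))
    (a b : ℝ) : ∀ᵐ ω ∂P, ∃ j, t j ω ∉ Ioo a b := by
  obtain ⟨m, hm⟩ := exists_nat_ge ((b - a) / δ)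
  rw [div_le_iff₀ hδ] at hm
  -- On `B k` the walk rises by at least `m * δ ≥ b - a` across the `k`-th block of length `m`.
  set B : ℕ → Set Ω := fun k => ⋂ i ∈ Finset.Ioc (m * k) (m * k + m), X i ⁻¹' Ioi δ
  have hB_meas : ∀ k, MeasurableSet[stepSigma X (Ioc (m * k) (m * k + m))] (B k) := fun k =>
    .biInter (Finset.countable_toSet _) fun i hi =>
      measurable_stepSigma (Finset.mem_Ioc.1 hi) measurableSet_Ioi
  have hB_indep : iIndepSet B P :=
    hind.iIndep.iIndepSet_of_pairwise_disjoint (fun i => (hX i).comap_le)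
      (pairwise_disjoint_Ioc_mul m) hB_meas
  have hB_prob : ∀ k, q ^ m ≤ P (B k) := fun k => by
    rw [hind.meas_biInter fun i _ => ⟨_, measurableSet_Ioi, rfl⟩]
    simpa using Finset.pow_card_le_prod (Finset.Ioc (m * k) (m * k + m)) _ _ fun i hi =>
      hXδ i (Nat.one_le_iff_ne_zero.2 (Finset.mem_Ioc.1 hi).1.ne_bot)
  have hB_sum : ∑' k, P (B k) = ∞ :=
    top_unique <| (ENNReal.tsum_const_eq_top_of_ne_zero (pow_ne_zero m hq)).ge.trans
      (ENNReal.tsum_le_tsum hB_prob)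
  filter_upwards [hB_indep.ae_exists_mem (fun k => stepSigma_le hX _ _ (hB_meas k)) hB_sum]
    with ω ⟨k, hk⟩
  by_contra! hstay
  have hrise : m * δ ≤ t (m * k + m) ω - t (m * k) ω := by
    rw [walk_add ht]
    simpa using Finset.card_nsmul_le_sum (Finset.range m) _ δ fun i hi =>
      (mem_iInter₂.1 hk (m * k + i + 1) (Finset.mem_Ioc.2 ⟨by omega,
        by simpa using Finset.mem_range.1 hi⟩)).le
  have h₁ := hstay (m * k)
  have h₂ := hstay (m * k + m)
  simp only [mem_Ioo] at h₁ h₂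
  linarith

theorem ae_walk_mem_Icc_of_le_firstExit {U : Set ℝ} {a b ε : ℝ} (ht₀ : t₀ ∈ U)
    (hUab : U ⊆ Icc a b) (hXb : ∀ i, 1 ≤ i → ∀ᵐ ω ∂P, |X i ω| ≤ ε) :
    ∀ᵐ ω ∂P, ∀ n ≤ firstExit (t · ω) U, t n ω ∈ Icc (a - ε) (b + ε) := by
  filter_upwards [ae_all_iff.2 fun i => hXb (i + 1) i.succ_pos] with ω hω n hn
  refine apply_mem_Icc_of_le_firstExit (u := (t · ω)) ?_ hUab (fun j => ?_) hn
  · simpa [ht] using ht₀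
  · simpa [walk_succ_sub ht] using hω j

variable [IsProbabilityMeasure P] (hX : ∀ i, Measurable (X i)) (hind : iIndepFun X P)
  {U : Set ℝ} (hU : MeasurableSet U) (hmean : ∀ i, 1 ≤ i → P[X i] = 0)
  (hexit : ∀ᵐ ω ∂P, ∃ j, t j ω ∉ U)

omit [IsProbabilityMeasure P] in
include hX hU in
theorem measurable_firstExit_walk : Measurable fun ω => firstExit (t · ω) U :=
  measurable_firstExit fun j => measurable_walk ht hX j hU

include hX hind hU hmean hexit

/-- The increment at step `i + 1` counts only on the event that the walk stayed in `U` up to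
time `i`; that event depends on the first `i` steps only, hence is independent of the mean-zero
step `X (i + 1)`. -/
theorem integral_walk_min_firstExit (hXint : ∀ i, 1 ≤ i → Integrable (X i) P) (n : ℕ) :
    ∫ ω, t (min (firstExit (t · ω) U) n) ω ∂P = t₀ := by
  set A : ℕ → Set Ω := fun i => ⋂ j ∈ Iic i, t j ⁻¹' U
  have hA : ∀ i, MeasurableSet[stepSigma X (Iic i)] (A i) := fun i =>
    .biInter (to_countable _) fun j hj =>
      measurable_walk_stepSigma ht (fun l hl => (hl.2.trans hj :)) hU
  have hsum : (fun ω => t (min (firstExit (t · ω) U) n) ω)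
      =ᵐ[P] fun ω => t₀ + ∑ i ∈ Finset.range n, (A i).indicator (X (i + 1)) ω := by
    filter_upwards [hexit] with ω hω
    rw [apply_min_firstExit_eq_sum (t · ω)]
    congr 1
    · simp [ht]
    · refine Finset.sum_congr rfl fun i _ => ?_
      by_cases h : ∀ j ≤ i, t j ω ∈ U
      · rw [if_pos ((lt_firstExit_iff hω).2 h), indicator_of_mem (by simpa [A] using h),
          walk_succ_sub ht]
      · rw [if_neg (mt (lt_firstExit_iff hω).1 h), indicator_of_notMem (by simpa [A] using h)]
  have hstep : ∀ i, ∫ ω in A i, X (i + 1) ω ∂P = 0 := fun i => by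
    have hindep := indep_of_indep_of_le_right
      (indep_stepSigma hX hind (disjoint_singleton_right.2 (by simp : i + 1 ∉ Iic i)))
      (le_biSup (fun i => MeasurableSpace.comap (X i) _) (mem_singleton (i + 1)))
    simpa [hmean (i + 1) i.succ_pos] using hindep.setIntegral_eq_mul (f := id)
      (stepSigma_le hX _) (hX _).aemeasurable (hA i) aestronglyMeasurable_id
  have hA' : ∀ i, MeasurableSet (A i) := fun i => stepSigma_le hX _ _ (hA i)
  rw [integral_congr_ae hsum, integral_add (integrable_const _)
    (integrable_finsetSum _ fun i _ => (hXint _ i.succ_pos).indicator (hA' i)),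
    integral_finsetSum _ fun i _ => (hXint _ i.succ_pos).indicator (hA' i)]
  simp [integral_indicator (hA' _), hstep]

theorem integral_walk_firstExit {a b ε : ℝ} (ht₀ : t₀ ∈ U) (hUab : U ⊆ Icc a b)
    (hXb : ∀ i, 1 ≤ i → ∀ᵐ ω ∂P, |X i ω| ≤ ε) :
    ∫ ω, t (firstExit (t · ω) U) ω ∂P = t₀ := by
  have hbound := ae_walk_mem_Icc_of_le_firstExit ht ht₀ hUab hXb
  have hXint : ∀ i, 1 ≤ i → Integrable (X i) P := fun i hi =>
    .of_bound (hX i).aestronglyMeasurable ε (by simpa using hXb i hi)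
  refine tendsto_nhds_unique (tendsto_integral_of_dominated_convergence
    (F := fun n ω => t (min (firstExit (t · ω) U) n) ω) (fun _ => max |a - ε| |b + ε|)
    (fun n => (measurable_apply_index (measurable_walk ht hX)
      ((measurable_firstExit_walk ht hX hU).min measurable_const)).aestronglyMeasurable)
    (integrable_const _) (fun n => ?_) (ae_of_all _ fun ω => ?_)) ?_
  · filter_upwards [hbound] with ω hω
    obtain ⟨hlo, hhi⟩ := hω _ (min_le_left _ n)
    exact abs_le_max_abs_abs hlo hhi
  · exact tendsto_atTop_of_eventually_const fun n hn => by rw [min_eq_left hn]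
  · simp_rw [integral_walk_min_firstExit ht hX hind hU hmean hexit hXint]
    exact tendsto_const_nhds

end RandomWalk

theorem one_sub_add_le_measureReal_nonpos {Ω : Type*} {mΩ : MeasurableSpace Ω}
    {P : Measure Ω} [IsProbabilityMeasure P] {Y : Ω → ℝ} (hYm : Measurable Y) {ε : ℝ}
    (hε : 0 ≤ ε) (hY : ∀ᵐ ω ∂P, Y ω ∈ Icc (-ε) (1 + ε) ∧ Y ω ∉ Ioo 0 1) :
    1 - (P[Y] + ε) ≤ P.real {ω | Y ω ≤ 0} := by
  set A := {ω | Y ω ≤ 0}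
  have hA : MeasurableSet A := hYm measurableSet_Iic
  have hYint : Integrable Y P := .of_bound hYm.aestronglyMeasurable (1 + ε) <| by
    filter_upwards [hY] with ω ⟨⟨hlo, hhi⟩, _⟩
    exact abs_le.2 ⟨by linarith, hhi⟩
  -- `Y ≥ -ε` on `A` and `Y ≥ 1` off `A`
  have hlow : ∀ᵐ ω ∂P, 1 - (1 + ε) * A.indicator 1 ω ≤ Y ω := by
    filter_upwards [hY] with ω ⟨⟨hlo, _⟩, hout⟩
    by_cases hω : Y ω ≤ 0
    · simp [A, hω]
      linarith
    · simp only [mem_Ioo, not_and, not_lt] at hω hout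
      simp [A, hω, hout (lt_of_not_ge hω)]
  have hAint : Integrable (fun ω => (1 + ε) * A.indicator 1 ω) P :=
    ((integrable_const 1).indicator hA).const_mul _
  have hint : ∫ ω, (1 - (1 + ε) * A.indicator 1 ω) ∂P ≤ P[Y] :=
    integral_mono_ae ((integrable_const 1).sub hAint) hYint hlow
  rw [integral_sub (integrable_const 1) hAint, integral_const, integral_const_mul,
    integral_indicator_one hA] at hint
  have hp : P.real A ≤ 1 := measureReal_le_one
  simp only [probReal_univ, smul_eq_mul, one_mul] at hint
  nlinarith

/-- **Random walk with varying step size, hitting probability (Lemma C.1, first part).**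
Let `ε ∈ (0,1)`, `t₀ ∈ (0,1)`, `(X_j)_{j ≥ 1}` i.i.d. uniform on `[−ε, ε]`,
`t_j = t₀ + X₁ + ⋯ + X_j` and `τ = inf{ j ≥ 0 : t_j ∉ (0,1) }`. Then `τ < ∞` almost
surely and `P(t_τ ≤ 0) ≥ 1 − (t₀ + ε)`. -/
theorem random_walk_hitting_probability
    {Ω' : Type*} [MeasurableSpace Ω'] (P : Measure Ω') [IsProbabilityMeasure P]
    (ε t₀ : ℝ) (hε : ε ∈ Set.Ioo (0 : ℝ) 1) (ht₀ : t₀ ∈ Set.Ioo (0 : ℝ) 1)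
    (X : ℕ → Ω' → ℝ) (hXmeas : ∀ j, Measurable (X j))
    (hindep : ProbabilityTheory.iIndepFun X P)
    (hunif : ∀ j, 1 ≤ j →
      Measure.map (X j) P = (ENNReal.ofReal (2 * ε))⁻¹ • volume.restrict (Set.Icc (-ε) ε))
    (t : ℕ → Ω' → ℝ) (ht : ∀ j ω, t j ω = t₀ + ∑ i ∈ Finset.range j, X (i + 1) ω)
    (τ : Ω' → ℕ) (hτ : ∀ ω, τ ω = sInf {j : ℕ | t j ω ∉ Set.Ioo (0 : ℝ) 1}) :
    (∀ᵐ ω ∂P, ∃ j : ℕ, t j ω ∉ Set.Ioo (0 : ℝ) 1) ∧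
      ENNReal.ofReal (1 - (t₀ + ε)) ≤ P {ω | t (τ ω) ω ≤ 0} := by
  obtain rfl : τ = fun ω => firstExit (t · ω) (Ioo 0 1) := funext hτ
  have hXunif : ∀ j, 1 ≤ j → pdf.IsUniform (X j) (Icc (-ε) ε) P := fun j hj => by
    rw [pdf.IsUniform, hunif j hj, ProbabilityTheory.cond, Real.volume_Icc]
    ring_nf
  have hexit : ∀ᵐ ω ∂P, ∃ j, t j ω ∉ Ioo 0 1 :=
    ae_exists_walk_notMem_Ioo ht hXmeas hindep (half_pos hε.1) (by norm_num : (1 / 4 : ℝ≥0∞) ≠ 0)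
      (fun j hj => ((hXunif j hj).measure_preimage_Ioi_half hε.1).ge) 0 1
  refine ⟨hexit, ?_⟩
  have hXb : ∀ j, 1 ≤ j → ∀ᵐ ω ∂P, |X j ω| ≤ ε := fun j hj => (hXunif j hj).ae_abs_le hε.1
  have hmean := integral_walk_firstExit ht hXmeas hindep measurableSet_Ioo
    (fun j hj => (hXunif j hj).integral_eq_zero_of_Icc_neg) hexit ht₀ Ioo_subset_Icc_self hXb
  have hY : ∀ᵐ ω ∂P, t (firstExit (t · ω) (Ioo 0 1)) ω ∈ Icc (-ε) (1 + ε)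
      ∧ t (firstExit (t · ω) (Ioo 0 1)) ω ∉ Ioo 0 1 := by
    filter_upwards [ae_walk_mem_Icc_of_le_firstExit ht ht₀ Ioo_subset_Icc_self hXb, hexit]
      with ω hω hωexit
    exact ⟨by simpa using hω _ le_rfl, apply_firstExit_notMem hωexit⟩
  exact ENNReal.ofReal_le_of_le_toReal (hmean ▸ one_sub_add_le_measureReal_nonpos
    (measurable_apply_index (measurable_walk ht hXmeas)
      (measurable_firstExit_walk ht hXmeas measurableSet_Ioo)) hε.1.le hY)
end

section
/- Random walk with varying step size, expected exit time (Lemma C.1, second part): let ε ∈ (0,1), t₀ ∈ (0,1), let (X_j)_{j≥1} be an i.i.d. sequence of random variables each uniformly distributed on [−ε, ε], set t_j = t₀ + X₁ + … + X_j, and let τ = inf{ j ≥ 0 : t_j ∉ (0,1) }. Then E[τ] ≤ 3(t₀ + 4ε)/ε². -/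
/-!
Let `S n = t_{min(n, τ)}` be the walk stopped on leaving `(0,1)`. Its increments
`1_{τ > k} X_{k+1}` are centred and the indicator is independent of `X_{k+1}`, so
`E S_n = t₀` and `E S_n² = t₀² + (ε²/3) ∑_{k<n} P(τ > k)`. As `S_n ∈ [-ε, 1+ε]`, we have
`S_n² ≤ S_n + ε(1+ε)`, whence `(ε²/3) ∑_{k<n} P(τ > k) ≤ t₀ + ε + ε²` for every `n`,
and `E τ = ∑_k P(τ > k)`.
-/

open MeasureTheory ProbabilityTheory Set
open scoped ENNReal

lemma ProbabilityTheory.Indep.indepFun_of_measurable {Ω : Type*} {m mΩ : MeasurableSpace Ω}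
    {P : Measure Ω} {f Y : Ω → ℝ}
    (hind : Indep m (MeasurableSpace.comap Y inferInstance) P) (hf : Measurable[m] f) :
    IndepFun f Y P :=
  (IndepFun_iff_Indep f Y P).2 (indep_of_indep_of_le_left hind hf.comap_le)

section IndependentIncrement

variable {Ω : Type*} {m mΩ : MeasurableSpace Ω} {P : Measure Ω} {f Y : Ω → ℝ} {B : Set Ω}

lemma indepFun_indicator_comp_of_indep
    (hind : Indep m (MeasurableSpace.comap Y inferInstance) P) (hB : MeasurableSet[m] B)
    (hf : Measurable[m] f) {g : ℝ → ℝ} (hg : Measurable g) :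
    IndepFun (B.indicator f) (fun ω => g (Y ω)) P :=
  (hind.indepFun_of_measurable (hf.indicator hB)).comp measurable_id hg

lemma integral_indicator_mul_comp_of_indep (hm : m ≤ mΩ)
    (hind : Indep m (MeasurableSpace.comap Y inferInstance) P) (hB : MeasurableSet[m] B)
    (hf : Measurable[m] f) (hY : Measurable Y) {g : ℝ → ℝ} (hg : Measurable g) :
    ∫ ω, B.indicator f ω * g (Y ω) ∂P = (∫ ω in B, f ω ∂P) * ∫ ω, g (Y ω) ∂P := by
  rw [(indepFun_indicator_comp_of_indep hind hB hf hg).integral_fun_mul_eq_mul_integral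
    ((hf.indicator hB).mono hm le_rfl).aestronglyMeasurable
    (hg.comp hY).aestronglyMeasurable, integral_indicator (hm B hB)]

lemma integral_add_indicator_of_indep (hm : m ≤ mΩ)
    (hind : Indep m (MeasurableSpace.comap Y inferInstance) P) (hB : MeasurableSet[m] B)
    (hf : Integrable f P) (hYm : Measurable Y) (hY : Integrable Y P) (hY0 : ∫ ω, Y ω ∂P = 0) :
    ∫ ω, f ω + B.indicator Y ω ∂P = ∫ ω, f ω ∂P := by
  have hBY : ∀ ω, B.indicator Y ω = B.indicator 1 ω * Y ω := by
    intro ω; by_cases h : ω ∈ B <;> simp [h]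
  rw [integral_add hf (hY.indicator (hm B hB))]
  simp_rw [hBY]
  rw [integral_indicator_mul_comp_of_indep hm hind hB (f := 1) measurable_const hYm
    (g := fun y => y) measurable_id, hY0, mul_zero, add_zero]

lemma integral_add_indicator_sq_of_indep [IsFiniteMeasure P] (hm : m ≤ mΩ)
    (hind : Indep m (MeasurableSpace.comap Y inferInstance) P) (hB : MeasurableSet[m] B)
    (hfm : Measurable[m] f) (hf : MemLp f 2 P) (hYm : Measurable Y) (hY : MemLp Y 2 P)
    (hY0 : ∫ ω, Y ω ∂P = 0) :
    ∫ ω, (f ω + B.indicator Y ω) ^ 2 ∂P = ∫ ω, f ω ^ 2 ∂P + P.real B * ∫ ω, Y ω ^ 2 ∂P := by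
  have hexpand : ∀ ω, (f ω + B.indicator Y ω) ^ 2
      = f ω ^ 2 + (2 * (B.indicator f ω * Y ω) + B.indicator 1 ω * Y ω ^ 2) := by
    intro ω
    by_cases h : ω ∈ B
    · simp only [indicator_of_mem h, Pi.one_apply]; ring
    · simp only [indicator_of_notMem h]; ring
  have hcross : Integrable (fun ω => B.indicator f ω * Y ω) P :=
    (indepFun_indicator_comp_of_indep hind hB hfm measurable_id).integrable_mul
      ((hf.integrable one_le_two).indicator (hm B hB)) (hY.integrable one_le_two)
  have hsq : Integrable (fun ω => B.indicator 1 ω * Y ω ^ 2) P :=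
    (indepFun_indicator_comp_of_indep hind hB measurable_const (measurable_id.pow_const 2)
      ).integrable_mul ((integrable_const 1).indicator (hm B hB)) hY.integrable_sq
  have hrest : Integrable (fun ω => 2 * (B.indicator f ω * Y ω) + B.indicator 1 ω * Y ω ^ 2) P :=
    (hcross.const_mul 2).add hsq
  simp_rw [hexpand]
  rw [integral_add hf.integrable_sq hrest, integral_add (hcross.const_mul 2) hsq,
    integral_const_mul,
    integral_indicator_mul_comp_of_indep hm hind hB hfm hYm (g := fun y => y) measurable_id, hY0,
    integral_indicator_mul_comp_of_indep hm hind hB (f := 1) measurable_const hYm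
      (g := fun y => y ^ 2) (measurable_id.pow_const 2)]
  simp [measureReal_def]

end IndependentIncrement

lemma ProbabilityTheory.iIndepFun.indep_natural_comap_succ {Ω : Type*} {mΩ : MeasurableSpace Ω}
    {P : Measure Ω} {X : ℕ → Ω → ℝ} (hXm : ∀ i, StronglyMeasurable (X i)) (h : iIndepFun X P)
    (n : ℕ) :
    Indep (Filtration.natural X hXm n) (MeasurableSpace.comap (X (n + 1)) inferInstance) P := by
  have hdisj : Disjoint (Set.Iic n) {n + 1} := by simp
  exact indep_of_indep_of_le_right
    (indep_iSup_of_disjoint (fun i => (hXm i).measurable.comap_le) h.iIndep hdisj)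
    (le_iSup₂ (f := fun i (_ : i ∈ ({n + 1} : Set ℕ)) => MeasurableSpace.comap (X i) _)
      (n + 1) rfl)

section RandomWalk

variable {Ω : Type*} {mΩ : MeasurableSpace Ω}

noncomputable def walk (t₀ : ℝ) (X : ℕ → Ω → ℝ) (n : ℕ) (ω : Ω) : ℝ :=
  t₀ + ∑ i ∈ Finset.range n, X (i + 1) ω

def survivalSet (U : Set ℝ) (t : ℕ → Ω → ℝ) (n : ℕ) : Set Ω :=
  {ω | ∀ k ≤ n, t k ω ∈ U}

/-- The walk frozen at its first exit from `U`, i.e. `t_{min(n, τ)}`. -/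
noncomputable def stoppedWalk (U : Set ℝ) (t₀ : ℝ) (X : ℕ → Ω → ℝ) (n : ℕ) (ω : Ω) : ℝ :=
  t₀ + ∑ k ∈ Finset.range n, (survivalSet U (walk t₀ X) k).indicator (X (k + 1)) ω

variable {U : Set ℝ} {t₀ : ℝ} {X : ℕ → Ω → ℝ}

lemma stoppedWalk_zero (ω : Ω) : stoppedWalk U t₀ X 0 ω = t₀ := by
  simp [stoppedWalk]

lemma stoppedWalk_succ (n : ℕ) (ω : Ω) :
    stoppedWalk U t₀ X (n + 1) ω
      = stoppedWalk U t₀ X n ω + (survivalSet U (walk t₀ X) n).indicator (X (n + 1)) ω := by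
  simp only [stoppedWalk, Finset.sum_range_succ, add_assoc]

lemma stoppedWalk_eq_walk {n : ℕ} {ω : Ω} (h : ω ∈ survivalSet U (walk t₀ X) n) :
    stoppedWalk U t₀ X n ω = walk t₀ X n ω := by
  refine congrArg (t₀ + ·) (Finset.sum_congr rfl fun k hk => indicator_of_mem ?_ _)
  exact fun j hj => h j (hj.trans (Finset.mem_range.1 hk).le)

lemma stoppedWalk_mem_Icc {a b ε : ℝ} (hU : U ⊆ Icc a b) (ht₀ : t₀ ∈ Icc a b) {ω : Ω}
    (hX : ∀ k, |X (k + 1) ω| ≤ ε) (n : ℕ) :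
    stoppedWalk U t₀ X n ω ∈ Icc (a - ε) (b + ε) := by
  have hε : 0 ≤ ε := (abs_nonneg _).trans (hX 0)
  induction n with
  | zero => simp only [stoppedWalk_zero]; exact ⟨by linarith [ht₀.1], by linarith [ht₀.2]⟩
  | succ n ih =>
    rw [stoppedWalk_succ]
    by_cases hω : ω ∈ survivalSet U (walk t₀ X) n
    · rw [indicator_of_mem hω, stoppedWalk_eq_walk hω]
      obtain ⟨hlo, hhi⟩ := hU (hω n le_rfl)
      obtain ⟨hXlo, hXhi⟩ := abs_le.1 (hX n)
      exact ⟨by linarith, by linarith⟩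
    · rwa [indicator_of_notMem hω, add_zero]

lemma mem_survivalSet_of_lt_sInf {t : ℕ → Ω → ℝ} {ω : Ω} {n : ℕ}
    (h : n < sInf {j | t j ω ∉ U}) : ω ∈ survivalSet U t n := by
  intro k hk
  by_contra hkU
  have := Nat.sInf_le (show k ∈ {j | t j ω ∉ U} from hkU)
  omega

lemma measurableSet_survivalSet {m : MeasurableSpace Ω} {t : ℕ → Ω → ℝ} {n : ℕ}
    (ht : ∀ k ≤ n, Measurable[m] (t k)) (hU : MeasurableSet U) :
    MeasurableSet[m] (survivalSet U t n) := by
  simp only [survivalSet, Set.ofPred_forall]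
  exact .iInter fun k => .iInter fun hk => ht k hk hU

section Adapted

variable {ℱ : Filtration ℕ mΩ} (hX : Adapted ℱ X)
include hX

lemma adapted_walk : Adapted ℱ (walk t₀ X) := fun _ =>
  measurable_const.add <| Finset.measurable_sum _ fun i hi =>
    (hX (i + 1)).mono (ℱ.mono (Finset.mem_range.1 hi)) le_rfl

lemma measurableSet_survivalSet_walk (hU : MeasurableSet U) (n : ℕ) :
    MeasurableSet[ℱ n] (survivalSet U (walk t₀ X) n) :=
  measurableSet_survivalSet (fun k hk => (adapted_walk hX k).mono (ℱ.mono hk) le_rfl) hU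

lemma adapted_stoppedWalk (hU : MeasurableSet U) : Adapted ℱ (stoppedWalk U t₀ X) := fun n =>
  measurable_const.add <| Finset.measurable_sum _ fun k hk =>
    have hkn : k + 1 ≤ n := Finset.mem_range.1 hk
    ((hX (k + 1)).mono (ℱ.mono hkn) le_rfl).indicator
      (ℱ.mono (by omega) _ (measurableSet_survivalSet_walk hX hU k))

end Adapted

end RandomWalk

section Moments

variable {Ω : Type*} {mΩ : MeasurableSpace Ω} {P : Measure Ω} [IsProbabilityMeasure P]
  {ℱ : Filtration ℕ mΩ} {U : Set ℝ} {t₀ : ℝ} {X : ℕ → Ω → ℝ}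
  (hX : Adapted ℱ X) (hU : MeasurableSet U) (hX2 : ∀ n, MemLp (X (n + 1)) 2 P)
include hX hU hX2

lemma memLp_stoppedWalk (n : ℕ) : MemLp (stoppedWalk U t₀ X n) 2 P := by
  induction n with
  | zero => rw [funext stoppedWalk_zero]; exact memLp_const t₀
  | succ n ih =>
    rw [funext (stoppedWalk_succ n)]
    exact ih.add ((hX2 n).indicator (ℱ.le n _ (measurableSet_survivalSet_walk hX hU n)))

variable (hind : ∀ n, Indep (ℱ n) (MeasurableSpace.comap (X (n + 1)) inferInstance) P)
  (hmean : ∀ n, ∫ ω, X (n + 1) ω ∂P = 0)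
include hind hmean

lemma integral_stoppedWalk (n : ℕ) : ∫ ω, stoppedWalk U t₀ X n ω ∂P = t₀ := by
  induction n with
  | zero => simp [stoppedWalk_zero]
  | succ n ih =>
    simp_rw [stoppedWalk_succ]
    rw [integral_add_indicator_of_indep (ℱ.le n) (hind n)
      (measurableSet_survivalSet_walk hX hU n)
      ((memLp_stoppedWalk hX hU hX2 n).integrable one_le_two)
      ((hX (n + 1)).mono (ℱ.le _) le_rfl) ((hX2 n).integrable one_le_two) (hmean n), ih]

lemma integral_stoppedWalk_sq {σ2 : ℝ} (hvar : ∀ n, ∫ ω, X (n + 1) ω ^ 2 ∂P = σ2) (n : ℕ) :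
    ∫ ω, stoppedWalk U t₀ X n ω ^ 2 ∂P
      = t₀ ^ 2 + σ2 * ∑ k ∈ Finset.range n, P.real (survivalSet U (walk t₀ X) k) := by
  induction n with
  | zero => simp [stoppedWalk_zero]
  | succ n ih =>
    simp_rw [stoppedWalk_succ]
    rw [integral_add_indicator_sq_of_indep (ℱ.le n) (hind n)
      (measurableSet_survivalSet_walk hX hU n) (adapted_stoppedWalk hX hU n)
      (memLp_stoppedWalk hX hU hX2 n) ((hX (n + 1)).mono (ℱ.le _) le_rfl) (hX2 n) (hmean n), ih,
      hvar, Finset.sum_range_succ]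
    ring

lemma sum_measureReal_survivalSet_le {a b ε σ2 : ℝ} (hUab : U ⊆ Icc a b) (ht₀ : t₀ ∈ Icc a b)
    (hbound : ∀ᵐ ω ∂P, ∀ k, |X (k + 1) ω| ≤ ε) (hvar : ∀ n, ∫ ω, X (n + 1) ω ^ 2 ∂P = σ2)
    (n : ℕ) :
    σ2 * ∑ k ∈ Finset.range n, P.real (survivalSet U (walk t₀ X) k)
      ≤ (t₀ - a) * (b - t₀) + ε * (b - a) + ε ^ 2 := by
  set S := stoppedWalk U t₀ X n
  have hS := memLp_stoppedWalk hX hU hX2 (t₀ := t₀) n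
  -- `S` stays in `[a - ε, b + ε]`, where `x ^ 2` lies below the chord through the endpoints.
  have hchord : ∀ᵐ ω ∂P, S ω ^ 2 ≤ (a + b) * S ω - (a - ε) * (b + ε) :=
    hbound.mono fun ω hω => by
      obtain ⟨hlo, hhi⟩ := stoppedWalk_mem_Icc hUab ht₀ hω n
      nlinarith
  have hS1 : Integrable S P := hS.integrable one_le_two
  have hchord_int : Integrable (fun ω => (a + b) * S ω - (a - ε) * (b + ε)) P :=
    (hS1.const_mul (a + b)).sub (integrable_const _)
  have hint := integral_mono_ae hS.integrable_sq hchord_int hchord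
  rw [integral_stoppedWalk_sq hX hU hX2 hind hmean hvar, integral_sub (hS1.const_mul (a + b))
    (integrable_const _), integral_const_mul, integral_stoppedWalk hX hU hX2 hind hmean,
    integral_const, probReal_univ, one_smul] at hint
  linarith

end Moments

section ExitTime

variable {Ω : Type*} {mΩ : MeasurableSpace Ω} {P : Measure Ω}

lemma lintegral_sInf_le_tsum_measure_survivalSet {U : Set ℝ} {t : ℕ → Ω → ℝ}
    (ht : ∀ n, Measurable (t n)) (hU : MeasurableSet U) :
    ∫⁻ ω, (sInf {j | t j ω ∉ U} : ℕ) ∂P ≤ ∑' n, P (survivalSet U t n) := by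
  have hmeas n : MeasurableSet (survivalSet U t n) :=
    measurableSet_survivalSet (fun k _ => ht k) hU
  calc ∫⁻ ω, (sInf {j | t j ω ∉ U} : ℕ) ∂P
      ≤ ∫⁻ ω, ∑' n, (survivalSet U t n).indicator 1 ω ∂P := by
        refine lintegral_mono fun ω => ?_
        calc ((sInf {j | t j ω ∉ U} : ℕ) : ℝ≥0∞)
            = ∑ n ∈ Finset.range (sInf {j | t j ω ∉ U}), (survivalSet U t n).indicator 1 ω := by
              rw [Finset.sum_congr rfl fun n hn =>
                indicator_of_mem (mem_survivalSet_of_lt_sInf (Finset.mem_range.1 hn)) _]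
              simp
          _ ≤ _ := ENNReal.sum_le_tsum _
    _ = ∑' n, P (survivalSet U t n) := by
        rw [lintegral_tsum fun n => (measurable_one.indicator (hmeas n)).aemeasurable]
        simp_rw [lintegral_indicator_one (hmeas _)]

lemma tsum_measure_le_ofReal_of_sum_range_le [IsFiniteMeasure P] {s : ℕ → Set Ω} {C : ℝ}
    (h : ∀ n, ∑ k ∈ Finset.range n, P.real (s k) ≤ C) : ∑' k, P (s k) ≤ ENNReal.ofReal C :=
  ENNReal.tsum_le_of_sum_range_le fun n => calc
    ∑ k ∈ Finset.range n, P (s k) = ENNReal.ofReal (∑ k ∈ Finset.range n, P.real (s k)) := by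
      rw [ENNReal.ofReal_sum_of_nonneg fun _ _ => measureReal_nonneg]
      exact Finset.sum_congr rfl fun k _ => (ofReal_measureReal (measure_ne_top P (s k))).symm
    _ ≤ ENNReal.ofReal C := ENNReal.ofReal_le_ofReal (h n)

end ExitTime

section Uniform

variable {Ω : Type*} {mΩ : MeasurableSpace Ω} {P : Measure Ω} {Y : Ω → ℝ} {ε : ℝ}

lemma MeasureTheory.pdf.IsUniform.ae_mem_s11 {E : Type*} [MeasurableSpace E] {μ : Measure E}
    {X : Ω → E} {s : Set E} (hu : IsUniform X s P μ) (hns : μ s ≠ 0) (hnt : μ s ≠ ∞)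
    (hs : MeasurableSet s) : ∀ᵐ ω ∂P, X ω ∈ s := by
  have h := hu.measure_preimage hns hnt hs.compl
  rw [inter_compl_self, measure_empty, ENNReal.zero_div] at h
  exact ae_iff.2 h

lemma MeasureTheory.pdf.IsUniform.integral_comp {E : Type*} [MeasurableSpace E] {μ : Measure E}
    {X : Ω → E} {s : Set E} (hu : IsUniform X s P μ) (hX : AEMeasurable X P) {g : E → ℝ}
    (hg : Measurable g) : ∫ ω, g (X ω) ∂P = (μ s).toReal⁻¹ * ∫ x in s, g x ∂μ := by
  rw [← integral_map hX hg.aestronglyMeasurable, hu, ProbabilityTheory.cond,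
    integral_smul_measure, smul_eq_mul, ENNReal.toReal_inv]

lemma isUniform_Icc_neg_of_map_eq
    (h : Measure.map Y P = (ENNReal.ofReal (2 * ε))⁻¹ • volume.restrict (Icc (-ε) ε)) :
    pdf.IsUniform Y (Icc (-ε) ε) P := by
  rwa [pdf.IsUniform, ProbabilityTheory.cond, Real.volume_Icc, sub_neg_eq_add, ← two_mul]

variable (hε : 0 < ε) (hu : pdf.IsUniform Y (Icc (-ε) ε) P)
include hε hu

lemma integral_eq_zero_of_isUniform_Icc_neg : ∫ ω, Y ω ∂P = 0 := by
  rw [hu.integral_eq, integral_Icc_eq_integral_Ioc, ← intervalIntegral.integral_of_le (by linarith),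
    integral_id]
  ring

lemma integral_sq_of_isUniform_Icc_neg : ∫ ω, Y ω ^ 2 ∂P = ε ^ 2 / 3 := by
  have hvol : volume (Icc (-ε) ε) ≠ 0 := by simpa using hε
  rw [hu.integral_comp (hu.aemeasurable hvol (by simp)) (g := fun x => x ^ 2) (by fun_prop),
    integral_Icc_eq_integral_Ioc, ← intervalIntegral.integral_of_le (by linarith), integral_pow,
    Real.volume_Icc, ENNReal.toReal_ofReal (by linarith)]
  field_simp
  ring

end Uniform

/-- **Random walk with varying step size, expected exit time (Lemma C.1, second part).**
Let `ε ∈ (0,1)`, `t₀ ∈ (0,1)`, `(X_j)_{j ≥ 1}` i.i.d. uniform on `[−ε, ε]`,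
`t_j = t₀ + X₁ + ⋯ + X_j` and `τ = inf{ j ≥ 0 : t_j ∉ (0,1) }`. Then
`E[τ] ≤ 3(t₀ + 4ε)/ε²`. -/
theorem random_walk_expected_exit_time
    {Ω' : Type*} [MeasurableSpace Ω'] (P : Measure Ω') [IsProbabilityMeasure P]
    (ε t₀ : ℝ) (hε : ε ∈ Set.Ioo (0 : ℝ) 1) (ht₀ : t₀ ∈ Set.Ioo (0 : ℝ) 1)
    (X : ℕ → Ω' → ℝ) (hXmeas : ∀ j, Measurable (X j))
    (hindep : ProbabilityTheory.iIndepFun X P)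
    (hunif : ∀ j, 1 ≤ j →
      Measure.map (X j) P = (ENNReal.ofReal (2 * ε))⁻¹ • volume.restrict (Set.Icc (-ε) ε))
    (t : ℕ → Ω' → ℝ) (ht : ∀ j ω, t j ω = t₀ + ∑ i ∈ Finset.range j, X (i + 1) ω)
    (τ : Ω' → ℕ) (hτ : ∀ ω, τ ω = sInf {j : ℕ | t j ω ∉ Set.Ioo (0 : ℝ) 1}) :
    ∫⁻ ω, (τ ω : ℝ≥0∞) ∂P ≤ ENNReal.ofReal (3 * (t₀ + 4 * ε) / ε ^ 2) := by
  obtain ⟨hε0, hε1⟩ := hε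
  obtain rfl : t = walk t₀ X := funext fun j => funext (ht j)
  obtain rfl : τ = fun ω => sInf {j | walk t₀ X j ω ∉ Ioo 0 1} := funext hτ
  have hu k : pdf.IsUniform (X (k + 1)) (Icc (-ε) ε) P :=
    isUniform_Icc_neg_of_map_eq (hunif _ k.succ_pos)
  have hbound : ∀ᵐ ω ∂P, ∀ k, |X (k + 1) ω| ≤ ε := ae_all_iff.2 fun k =>
    ((hu k).ae_mem_s11 (by simpa using hε0) (by simp) measurableSet_Icc).mono fun _ h => abs_le.2 h
  have hX2 k : MemLp (X (k + 1)) 2 P :=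
    MemLp.of_bound (hXmeas _).aestronglyMeasurable ε (ae_all_iff.1 hbound k)
  set ℱ := Filtration.natural X fun i => (hXmeas i).stronglyMeasurable
  have hadapted : Adapted ℱ X := (Filtration.stronglyAdapted_natural _).adapted
  have hsum n := sum_measureReal_survivalSet_le hadapted measurableSet_Ioo hX2
    (hindep.indep_natural_comap_succ _) (fun k => integral_eq_zero_of_isUniform_Icc_neg hε0 (hu k))
    Ioo_subset_Icc_self (Ioo_subset_Icc_self ht₀) hbound
    (fun k => integral_sq_of_isUniform_Icc_neg hε0 (hu k)) n
  calc _ ≤ ∑' n, P (survivalSet (Ioo 0 1) (walk t₀ X) n) :=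
        lintegral_sInf_le_tsum_measure_survivalSet
          (fun n => (adapted_walk hadapted n).mono (ℱ.le n) le_rfl) measurableSet_Ioo
    _ ≤ _ := tsum_measure_le_ofReal_of_sum_range_le fun n => by
        have hε2 : ε ^ 2 ≤ ε := by nlinarith
        rw [le_div_iff₀ (by positivity)]
        nlinarith [hsum n, sq_nonneg t₀]
end

section
/- Semicontinuity of averaged ball extrema: let u : ℝⁿ → ℝ be bounded and ε > 0. Then the function x ↦ (1/ε) ∫₀^ε sup_{B_t(x)} u dt is lower semicontinuous on ℝⁿ (hence Borel measurable), and the function x ↦ (1/ε) ∫₀^ε inf_{B_t(x)} u dt is upper semicontinuous on ℝⁿ (hence Borel measurable). -/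
/-!
Write `g_x(t) = sup_{B_t(x)} u`. For `t > 0` this is nondecreasing in `t`, and
`B_t(x) ⊆ B_{t+d}(y)` with `d = dist x y` gives `g_x(t) ≤ g_y(t + d)`. Integrating over
`(0, ε)`, `∫₀^ε g_x ≤ ∫_d^{ε+d} g_y`, which differs from `∫₀^ε g_y` by two integrals over
intervals of length `d`, each at most `M d` in absolute value when `|u| ≤ M`. So
`x ↦ ∫₀^ε g_x` is `2M`-Lipschitz, in particular continuous; the infimum case follows by
passing to `-u`.
-/

open MeasureTheory Metric Set intervalIntegral
open scoped NNReal

theorem Real.abs_sSup_le {s : Set ℝ} {M : ℝ} (hM : 0 ≤ M) (hs : ∀ a ∈ s, |a| ≤ M) :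
    |sSup s| ≤ M := by
  refine abs_le.2 ⟨?_, Real.sSup_le (fun a ha => (abs_le.1 (hs a ha)).2) hM⟩
  rcases s.eq_empty_or_nonempty with rfl | ⟨a, ha⟩
  · simpa using hM
  · exact (abs_le.1 (hs a ha)).1.trans
      (le_csSup ⟨M, fun b hb => (abs_le.1 (hs b hb)).2⟩ ha)

theorem Real.sInf_image_eq_neg_sSup_image_neg {α : Type*} (u : α → ℝ) (s : Set α) :
    sInf (u '' s) = -sSup ((fun a => -u a) '' s) := by
  rw [← Real.sInf_neg, ← Set.image_neg_eq_neg, Set.image_image]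
  simp only [neg_neg]

section BallSup

variable {X : Type*} [PseudoMetricSpace X] {u : X → ℝ}

-- Inserting the centre changes nothing for `t > 0` but makes the function monotone on all of `ℝ`.
theorem monotone_sSup_image_insert_ball (hu : BddAbove (range u)) (x : X) :
    Monotone fun t => sSup (u '' insert x (ball x t)) := fun _ _ hst =>
  csSup_le_csSup (hu.mono (image_subset_range _ _)) ((insert_nonempty _ _).image u)
    (image_mono (insert_subset_insert (ball_subset_ball hst)))

theorem intervalIntegrable_sSup_image_ball_s12 (hu : BddAbove (range u)) (x : X) {a b : ℝ}
    (ha : 0 ≤ a) (hb : 0 ≤ b) :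
    IntervalIntegrable (fun t => sSup (u '' ball x t)) volume a b := by
  refine ((monotone_sSup_image_insert_ball hu x).monotoneOn _).intervalIntegrable.congr ?_
  intro t ht
  have ht₀ : 0 < t := (le_min ha hb).trans_lt ht.1
  simp only [insert_eq_of_mem (mem_ball_self ht₀)]

theorem sSup_image_ball_le_sSup_image_ball_add_dist (hu : BddAbove (range u)) (x y : X) {t : ℝ}
    (ht : 0 < t) : sSup (u '' ball x t) ≤ sSup (u '' ball y (t + dist x y)) :=
  csSup_le_csSup (hu.mono (image_subset_range _ _)) ((nonempty_ball.2 ht).image u)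
    (image_mono (ball_subset_ball' le_rfl))

variable {M : ℝ≥0}

theorem abs_integral_sSup_image_ball_le (hu : ∀ x, |u x| ≤ M) (x : X) (a b : ℝ) :
    |∫ t in a..b, sSup (u '' ball x t)| ≤ M * |b - a| :=
  norm_integral_le_of_norm_le_const (f := fun t => sSup (u '' ball x t)) fun _ _ =>
    Real.abs_sSup_le M.2 (forall_mem_image.2 fun z _ => hu z)

theorem integral_sSup_image_ball_le_add_dist (hu : ∀ x, |u x| ≤ M) (x y : X) {ε : ℝ}
    (hε : 0 ≤ ε) :
    ∫ t in 0..ε, sSup (u '' ball x t) ≤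
      (∫ t in 0..ε, sSup (u '' ball y t)) + 2 * M * dist x y := by
  set d := dist x y
  have hd : 0 ≤ d := dist_nonneg
  have hbdd : BddAbove (range u) := ⟨M, forall_mem_range.2 fun z => (abs_le.1 (hu z)).2⟩
  have hint {a b : ℝ} (ha : 0 ≤ a) (hb : 0 ≤ b) :=
    intervalIntegrable_sSup_image_ball_s12 hbdd y ha hb
  have hshift :
      ∫ t in 0..ε, sSup (u '' ball y (t + d)) = ∫ t in d..ε + d, sSup (u '' ball y t) := by
    simp [integral_comp_add_right fun t => sSup (u '' ball y t)]
  have hsplit := integral_interval_sub_interval_comm' (hint hd (add_nonneg hε hd))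
    (hint le_rfl hε) (hint hd le_rfl)
  have htail := abs_le.1 (abs_integral_sSup_image_ball_le hu y ε (ε + d))
  have hhead := abs_le.1 (abs_integral_sSup_image_ball_le hu y 0 d)
  simp only [add_sub_cancel_left, sub_zero, abs_of_nonneg hd] at htail hhead
  calc ∫ t in 0..ε, sSup (u '' ball x t)
      ≤ ∫ t in 0..ε, sSup (u '' ball y (t + d)) := by
        refine integral_mono_on_of_le_Ioo hε (intervalIntegrable_sSup_image_ball_s12 hbdd x le_rfl hε)
          ?_ fun t ht => sSup_image_ball_le_sSup_image_ball_add_dist hbdd x y ht.1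
        simpa using (hint hd (add_nonneg hε hd)).comp_add_right d
    _ = ∫ t in d..ε + d, sSup (u '' ball y t) := hshift
    _ = (∫ t in 0..ε, sSup (u '' ball y t)) +
          ((∫ t in ε..ε + d, sSup (u '' ball y t)) - ∫ t in 0..d, sSup (u '' ball y t)) := by
        linarith
    _ ≤ (∫ t in 0..ε, sSup (u '' ball y t)) + 2 * M * d := by linarith

theorem integral_sSup_image_ball_of_nonpos (x : X) {ε : ℝ} (hε : ε ≤ 0) :
    ∫ t in 0..ε, sSup (u '' ball x t) = 0 := by
  rw [integral_congr (g := fun _ => 0) fun t ht => ?_, intervalIntegral.integral_zero]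
  rw [uIcc_of_ge hε] at ht
  simp [ball_eq_empty.2 ht.2]

theorem lipschitzWith_integral_sSup_image_ball (hu : ∀ x, |u x| ≤ M) (ε : ℝ) :
    LipschitzWith (2 * M) fun x => ∫ t in 0..ε, sSup (u '' ball x t) := by
  rcases le_total ε 0 with hε | hε
  · simpa only [integral_sSup_image_ball_of_nonpos _ hε] using
      (LipschitzWith.const (α := X) (0 : ℝ)).weaken zero_le
  · refine LipschitzWith.of_le_add_mul _ fun x y => ?_
    push_cast
    exact integral_sSup_image_ball_le_add_dist hu x y hε

theorem lipschitzWith_integral_sInf_image_ball (hu : ∀ x, |u x| ≤ M) (ε : ℝ) :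
    LipschitzWith (2 * M) fun x => ∫ t in 0..ε, sInf (u '' ball x t) := by
  simp_rw [Real.sInf_image_eq_neg_sSup_image_neg u, intervalIntegral.integral_neg]
  exact (lipschitzWith_integral_sSup_image_ball (u := fun z => -u z)
    (fun z => by simpa using hu z) ε).neg

end BallSup

theorem averaged_ball_extrema_semicontinuous_general (n : ℕ)
    (u : EuclideanSpace ℝ (Fin n) → ℝ) (hu : ∃ M, ∀ x, |u x| ≤ M)
    (ε : ℝ) :
    (LowerSemicontinuous fun x : EuclideanSpace ℝ (Fin n) =>
        (1 / ε) * ∫ t in (0 : ℝ)..ε, sSup (u '' Metric.ball x t)) ∧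
    (Measurable fun x : EuclideanSpace ℝ (Fin n) =>
        (1 / ε) * ∫ t in (0 : ℝ)..ε, sSup (u '' Metric.ball x t)) ∧
    (UpperSemicontinuous fun x : EuclideanSpace ℝ (Fin n) =>
        (1 / ε) * ∫ t in (0 : ℝ)..ε, sInf (u '' Metric.ball x t)) ∧
    (Measurable fun x : EuclideanSpace ℝ (Fin n) =>
        (1 / ε) * ∫ t in (0 : ℝ)..ε, sInf (u '' Metric.ball x t)) := by
  obtain ⟨M, hM⟩ := hu
  have hu' : ∀ x, |u x| ≤ M.toNNReal := fun x => (hM x).trans (Real.le_coe_toNNReal M)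
  have hsup := (continuous_const (y := 1 / ε)).mul
    (lipschitzWith_integral_sSup_image_ball hu' ε).continuous
  have hinf := (continuous_const (y := 1 / ε)).mul
    (lipschitzWith_integral_sInf_image_ball hu' ε).continuous
  exact ⟨hsup.lowerSemicontinuous, hsup.measurable, hinf.upperSemicontinuous, hinf.measurable⟩

/-- **Semicontinuity of averaged ball extrema.** For `u : ℝⁿ → ℝ` bounded and `ε > 0`, the
function `x ↦ (1/ε) ∫₀^ε sup_{B_t(x)} u dt` is lower semicontinuous (hence Borel) and
`x ↦ (1/ε) ∫₀^ε inf_{B_t(x)} u dt` is upper semicontinuous (hence Borel). -/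
theorem averaged_ball_extrema_semicontinuous (n : ℕ)
    (u : EuclideanSpace ℝ (Fin n) → ℝ) (hu : ∃ M, ∀ x, |u x| ≤ M)
    (ε : ℝ) (hε : 0 < ε) :
    (LowerSemicontinuous fun x : EuclideanSpace ℝ (Fin n) =>
        (1 / ε) * ∫ t in (0 : ℝ)..ε, sSup (u '' Metric.ball x t)) ∧
    (Measurable fun x : EuclideanSpace ℝ (Fin n) =>
        (1 / ε) * ∫ t in (0 : ℝ)..ε, sSup (u '' Metric.ball x t)) ∧
    (UpperSemicontinuous fun x : EuclideanSpace ℝ (Fin n) =>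
        (1 / ε) * ∫ t in (0 : ℝ)..ε, sInf (u '' Metric.ball x t)) ∧
    (Measurable fun x : EuclideanSpace ℝ (Fin n) =>
        (1 / ε) * ∫ t in (0 : ℝ)..ε, sInf (u '' Metric.ball x t)) :=
  averaged_ball_extrema_semicontinuous_general n u hu ε
end

section
/- Volume of the difference of overlapping balls: let n ≥ 1, ε > 0 and x, y ∈ ℝⁿ with |x − y| ≤ ε. Then the Lebesgue measure of B_ε(x) \ B_ε(y) satisfies vol( B_ε(x) \ B_ε(y) ) ≤ n (|x − y|/ε) · vol( B_ε(x) ). -/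
open MeasureTheory Metric Set
open scoped ENNReal

lemma pow_sub_pow_le_aux {a b : ℝ} (hb : 0 ≤ b) (hab : b ≤ a) :
    ∀ n : ℕ, a ^ n - b ^ n ≤ n * (a - b) * a ^ (n - 1)
  | 0 => by simp
  | (m + 1) => by
    have ha : 0 ≤ a := hb.trans hab
    have h1 : a ^ (m + 1) - b ^ (m + 1) = a * (a ^ m - b ^ m) + (a - b) * b ^ m := by
      ring
    have h2 : a * (a ^ m - b ^ m) ≤ m * (a - b) * a ^ m := by
      cases m with
      | zero => simp
      | succ k =>
        have ih := pow_sub_pow_le_aux hb hab (k + 1)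
        simp only [Nat.add_sub_cancel] at ih
        have := mul_le_mul_of_nonneg_left ih ha
        push_cast at this ⊢
        calc a * (a ^ (k + 1) - b ^ (k + 1)) ≤ a * (((k : ℝ) + 1) * (a - b) * a ^ k) := this
          _ = ((k : ℝ) + 1) * (a - b) * a ^ (k + 1) := by ring
    have h3 : (a - b) * b ^ m ≤ (a - b) * a ^ m :=
      mul_le_mul_of_nonneg_left (pow_le_pow_left₀ hb hab m) (by linarith)
    simp only [Nat.add_sub_cancel]
    push_cast
    linarith

/-- **Volume of the difference of overlapping balls.** For `n ≥ 1`, `ε > 0` and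
`x, y ∈ ℝⁿ` with `|x − y| ≤ ε`,
`vol(B_ε(x) \ B_ε(y)) ≤ n (|x − y|/ε) vol(B_ε(x))`. -/
theorem volume_ball_diff_le (n : ℕ) (hn : 1 ≤ n) (ε : ℝ) (hε : 0 < ε)
    (x y : EuclideanSpace ℝ (Fin n)) (hxy : dist x y ≤ ε) :
    volume (Metric.ball x ε \ Metric.ball y ε) ≤
      ENNReal.ofReal (n * (dist x y / ε)) * volume (Metric.ball x ε) := by
  have : Nontrivial (EuclideanSpace ℝ (Fin n)) := by
    have : Nonempty (Fin n) := ⟨⟨0, hn⟩⟩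
    infer_instance
  set d := dist x y with hd
  have hd0 : 0 ≤ d := dist_nonneg
  have hsub : Metric.ball x ε \ Metric.ball y ε ⊆
      Metric.ball x ε \ Metric.ball x (ε - d) := by
    intro z hz
    refine ⟨hz.1, fun hz' => hz.2 ?_⟩
    rw [mem_ball] at hz' ⊢
    have := dist_triangle z x y
    rw [← hd] at this
    linarith
  have hball : ∀ r : ℝ, 0 ≤ r → volume (Metric.ball x r)
      = ENNReal.ofReal (r ^ n) * volume (Metric.ball (0 : EuclideanSpace ℝ (Fin n)) 1) := by
    intro r hr
    rw [Measure.addHaar_ball volume x hr, finrank_euclideanSpace_fin]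
  set v := volume (Metric.ball (0 : EuclideanSpace ℝ (Fin n)) 1) with hv
  have hvfin : v ≠ ⊤ := measure_ball_lt_top.ne
  have hdiff : volume (Metric.ball x ε \ Metric.ball x (ε - d))
      ≤ ENNReal.ofReal (ε ^ n - (ε - d) ^ n) * v := by
    have hmeas : volume (Metric.ball x ε \ Metric.ball x (ε - d))
        = volume (Metric.ball x ε) - volume (Metric.ball x (ε - d)) := by
      apply measure_diff (Metric.ball_subset_ball (by linarith))
        measurableSet_ball.nullMeasurableSet measure_ball_lt_top.ne
    rw [hmeas, hball ε hε.le, hball (ε - d) (by linarith),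
      ENNReal.ofReal_sub _ (pow_nonneg (by linarith) n),
      ENNReal.sub_mul (fun _ _ => hvfin)]
  calc volume (Metric.ball x ε \ Metric.ball y ε)
      ≤ volume (Metric.ball x ε \ Metric.ball x (ε - d)) := measure_mono hsub
    _ ≤ ENNReal.ofReal (ε ^ n - (ε - d) ^ n) * v := hdiff
    _ ≤ ENNReal.ofReal (n * (d / ε)) * volume (Metric.ball x ε) := by
        rw [hball ε hε.le, ← mul_assoc, ← ENNReal.ofReal_mul (by positivity)]
        gcongr
        have key : ε ^ n - (ε - d) ^ n ≤ n * d * ε ^ (n - 1) := by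
          have := pow_sub_pow_le_aux (a := ε) (b := ε - d) (by linarith) (by linarith) n
          simpa using this
        calc ε ^ n - (ε - d) ^ n ≤ n * d * ε ^ (n - 1) := key
          _ = n * (d / ε) * ε ^ n := by
              obtain ⟨k, rfl⟩ := Nat.exists_eq_add_of_le hn
              simp only [Nat.add_sub_cancel_left, Nat.add_sub_cancel]
              field_simp
              ring
end

section
/- Cancellation estimate for ball averages: let n ≥ 1, ε > 0, L ≥ 0, and x, y ∈ ℝⁿ with |x − y| ≤ ε. Let u : ℝⁿ → ℝ be bounded Borel and suppose |u(z) − u(z')| ≤ L(|z − z'| + ε) for all z, z' ∈ B_{3ε}(x). Then | ⨍_{B_ε(x)} u(z) dz − ⨍_{B_ε(y)} u(z) dz | ≤ 6 n L |x − y|. -/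
open MeasureTheory Measure Metric Set Module

/-!
Subtracting the constant `u x` does not change the difference of the two averages, which is
therefore `1 / |B_ε|` times the difference of the integrals of `u - u x` over `B_ε(x) \ B_ε(y)`
and `B_ε(y) \ B_ε(x)`. On both pieces `|u - u x| ≤ 3 L ε`, and each piece lies in an annulus
`B_ε \ B_{ε - d}` with `d = |x - y|`, whose volume is at most `n d / ε` times `|B_ε|` because
`ε ^ n - (ε - d) ^ n ≤ n d ε ^ (n - 1)`.
-/

section SetIntegral

variable {α : Type*} [MeasurableSpace α] {μ : Measure α}

theorem abs_setIntegral_sub_setIntegral_le {f : α → ℝ} {A B : Set α} {C : ℝ}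
    (hA : MeasurableSet A) (hB : MeasurableSet B) (hAμ : μ A ≠ ⊤) (hBμ : μ B ≠ ⊤)
    (hfA : IntegrableOn f A μ) (hfB : IntegrableOn f B μ) (hbound : ∀ z ∈ A ∪ B, |f z| ≤ C) :
    |(∫ z in A, f z ∂μ) - ∫ z in B, f z ∂μ| ≤ C * (μ.real (A \ B) + μ.real (B \ A)) := by
  have hpiece : ∀ {S T : Set α}, μ S ≠ ⊤ → S ⊆ A ∪ B →
      |∫ z in S \ T, f z ∂μ| ≤ C * μ.real (S \ T) := fun hSμ hS =>
    norm_setIntegral_le_of_norm_le_const ((measure_mono sdiff_subset).trans_lt hSμ.lt_top)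
      fun z hz => (Real.norm_eq_abs _).trans_le (hbound z (hS hz.1))
  rw [← integral_inter_add_sdiff hB hfA, ← integral_inter_add_sdiff hA hfB, inter_comm B A,
    add_sub_add_left_eq_sub]
  calc _ ≤ |∫ z in A \ B, f z ∂μ| + |∫ z in B \ A, f z ∂μ| := abs_sub _ _
    _ ≤ C * μ.real (A \ B) + C * μ.real (B \ A) :=
      add_le_add (hpiece hAμ subset_union_left) (hpiece hBμ subset_union_right)
    _ = _ := by ring

theorem abs_setAverage_sub_setAverage_le {u : α → ℝ} {A B : Set α} {c C : ℝ}
    (hA : MeasurableSet A) (hB : MeasurableSet B) (hAB : μ A = μ B) (hAμ : μ A ≠ ⊤)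
    (hu : AEStronglyMeasurable u μ) (hbound : ∀ z ∈ A ∪ B, |u z - c| ≤ C) :
    |(⨍ z in A, u z ∂μ) - ⨍ z in B, u z ∂μ| ≤
      C * (μ.real (A \ B) + μ.real (B \ A)) / μ.real A := by
  have hBμ : μ B ≠ ⊤ := hAB ▸ hAμ
  have hreal : μ.real B = μ.real A := by rw [measureReal_def, measureReal_def, hAB]
  have hint : ∀ S ⊆ A ∪ B, MeasurableSet S → μ S ≠ ⊤ → IntegrableOn u S μ :=
    fun S hS hSm hSμ => Measure.integrableOn_of_bounded hSμ hu (M := |c| + C) <|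
      ae_restrict_of_forall_mem hSm fun z hz => by
        rw [Real.norm_eq_abs]
        linarith [abs_sub_abs_le_abs_sub (u z) c, hbound z (hS hz)]
  have hshift : (∫ z in A, u z ∂μ) - ∫ z in B, u z ∂μ =
      (∫ z in A, (u z - c) ∂μ) - ∫ z in B, (u z - c) ∂μ := by
    rw [integral_sub (hint A subset_union_left hA hAμ) (integrableOn_const hAμ),
      integral_sub (hint B subset_union_right hB hBμ) (integrableOn_const hBμ),
      setIntegral_const, setIntegral_const, hreal]
    ring
  rw [setAverage_eq, setAverage_eq, hreal, smul_eq_mul, smul_eq_mul, ← mul_sub, hshift, abs_mul,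
    abs_inv, abs_of_nonneg measureReal_nonneg, div_eq_inv_mul]
  gcongr
  exact abs_setIntegral_sub_setIntegral_le hA hB hAμ hBμ
    ((hint A subset_union_left hA hAμ).sub (integrableOn_const hAμ))
    ((hint B subset_union_right hB hBμ).sub (integrableOn_const hBμ)) hbound

end SetIntegral

section AddHaar

variable {E : Type*} [NormedAddCommGroup E] [NormedSpace ℝ E] [FiniteDimensional ℝ E]
  [Nontrivial E] [MeasurableSpace E] [BorelSpace E] (μ : Measure E) [μ.IsAddHaarMeasure]

theorem addHaar_real_ball (x : E) {r : ℝ} (hr : 0 ≤ r) :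
    μ.real (ball x r) = r ^ finrank ℝ E * μ.real (ball 0 1) := by
  rw [← addHaar_real_closedBall_eq_addHaar_real_ball, addHaar_real_closedBall μ x hr]

theorem mul_addHaar_real_ball_sdiff_ball_le {x y : E} {r : ℝ} (hxy : dist x y ≤ r) :
    r * μ.real (ball x r \ ball y r) ≤ finrank ℝ E * dist x y * μ.real (ball x r) := by
  set n := finrank ℝ E
  set d := dist x y
  have hd : 0 ≤ d := dist_nonneg
  have hr : 0 ≤ r := hd.trans hxy
  have hrd : 0 ≤ r - d := sub_nonneg.2 hxy
  have hsub : ball x (r - d) ⊆ ball y r := fun z hz => by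
    rw [mem_ball] at hz ⊢
    linarith [dist_triangle z x y]
  have hannulus : μ.real (ball x r \ ball y r) ≤ (r ^ n - (r - d) ^ n) * μ.real (ball (0 : E) 1) :=
    calc μ.real (ball x r \ ball y r) ≤ μ.real (ball x r \ ball x (r - d)) :=
          measureReal_mono (sdiff_subset_sdiff_right hsub)
            ((measure_mono sdiff_subset).trans_lt measure_ball_lt_top).ne
      _ = _ := by
        rw [measureReal_sdiff (ball_subset_ball (sub_le_self r hd)) measurableSet_ball,
          addHaar_real_ball μ x hr, addHaar_real_ball μ x hrd]
        ring
  have hpow : r ^ n - (r - d) ^ n ≤ d * n * r ^ (n - 1) := by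
    have := abs_pow_sub_pow_le r (r - d) n
    rwa [sub_sub_cancel, abs_of_nonneg hd, abs_of_nonneg hr, abs_of_nonneg hrd,
      max_eq_left (by linarith),
      abs_of_nonneg (sub_nonneg.2 (pow_le_pow_left₀ hrd (by linarith) n))] at this
  have hrn : r * r ^ (n - 1) = r ^ n := by rw [← pow_succ', Nat.sub_add_cancel finrank_pos]
  calc r * μ.real (ball x r \ ball y r)
      ≤ r * ((r ^ n - (r - d) ^ n) * μ.real (ball (0 : E) 1)) := by gcongr
    _ ≤ r * (d * n * r ^ (n - 1) * μ.real (ball (0 : E) 1)) := by gcongr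
    _ = n * d * μ.real (ball x r) := by rw [addHaar_real_ball μ x hr, ← hrn]; ring

end AddHaar

theorem ball_average_cancellation_general (n : ℕ) (hn : 1 ≤ n) (ε L : ℝ) (hε : 0 < ε) (hL : 0 ≤ L)
    (x y : EuclideanSpace ℝ (Fin n)) (hxy : dist x y ≤ ε)
    (u : EuclideanSpace ℝ (Fin n) → ℝ)
    (humeas : Measurable u)
    (hulip : ∀ z ∈ Metric.ball x (3 * ε), ∀ z' ∈ Metric.ball x (3 * ε),
      |u z - u z'| ≤ L * (dist z z' + ε)) :
    |(⨍ z in Metric.ball x ε, u z) - ⨍ z in Metric.ball y ε, u z| ≤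
      6 * n * L * dist x y := by
  have : Nontrivial (EuclideanSpace ℝ (Fin n)) :=
    nontrivial_of_finrank_pos (R := ℝ) (by rwa [finrank_euclideanSpace_fin])
  have hbound : ∀ z ∈ ball x ε ∪ ball y ε, |u z - u x| ≤ 3 * L * ε := by
    intro z hz
    have hzx : dist z x < 2 * ε := by
      rcases hz with hz | hz <;> rw [mem_ball] at hz <;>
        linarith [dist_triangle z y x, dist_comm x y]
    calc |u z - u x| ≤ L * (dist z x + ε) :=
          hulip z (mem_ball.2 (by linarith)) x (mem_ball_self (by linarith))
      _ ≤ 3 * L * ε := by nlinarith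
  have hV : 0 < volume.real (ball x ε) :=
    ENNReal.toReal_pos (measure_ball_pos _ _ hε).ne' measure_ball_lt_top.ne
  have hshell := mul_addHaar_real_ball_sdiff_ball_le volume hxy
  have hshell' := mul_addHaar_real_ball_sdiff_ball_le volume ((dist_comm y x).trans_le hxy)
  rw [addHaar_real_ball_center volume y, ← addHaar_real_ball_center volume x, dist_comm y x]
    at hshell'
  simp only [finrank_euclideanSpace_fin] at hshell hshell'
  calc _ ≤ 3 * L * ε * (volume.real (ball x ε \ ball y ε) + volume.real (ball y ε \ ball x ε)) /
        volume.real (ball x ε) :=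
        abs_setAverage_sub_setAverage_le measurableSet_ball measurableSet_ball
          ((addHaar_ball_center _ x ε).trans (addHaar_ball_center _ y ε).symm)
          measure_ball_lt_top.ne humeas.aestronglyMeasurable hbound
    _ ≤ 3 * L * (2 * (n * dist x y * volume.real (ball x ε))) / volume.real (ball x ε) := by
        rw [mul_assoc (3 * L), mul_add]; gcongr; linarith
    _ = 6 * n * L * dist x y := by field_simp; ring

/-- **Cancellation estimate for ball averages.** Let `n ≥ 1`, `ε > 0`, `L ≥ 0`,
`|x − y| ≤ ε`, and let `u` be bounded Borel with `|u(z) − u(z')| ≤ L(|z − z'| + ε)` for all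
`z, z' ∈ B_{3ε}(x)`. Then `|⨍_{B_ε(x)} u − ⨍_{B_ε(y)} u| ≤ 6 n L |x − y|`. -/
theorem ball_average_cancellation (n : ℕ) (hn : 1 ≤ n) (ε L : ℝ) (hε : 0 < ε) (hL : 0 ≤ L)
    (x y : EuclideanSpace ℝ (Fin n)) (hxy : dist x y ≤ ε)
    (u : EuclideanSpace ℝ (Fin n) → ℝ)
    (humeas : Measurable u) (hubdd : ∃ M, ∀ z, |u z| ≤ M)
    (hulip : ∀ z ∈ Metric.ball x (3 * ε), ∀ z' ∈ Metric.ball x (3 * ε),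
      |u z - u z'| ≤ L * (dist z z' + ε)) :
    |(⨍ z in Metric.ball x ε, u z) - ⨍ z in Metric.ball y ε, u z| ≤
      6 * n * L * dist x y :=
  ball_average_cancellation_general n hn ε L hε hL x y hxy u humeas hulip
end

section
/- Cancellation estimate for the tug-of-war part: let n ≥ 1, ε > 0, L ≥ 0, and x, y ∈ ℝⁿ with |x − y| ≤ ε. Let u : ℝⁿ → ℝ be bounded and suppose |u(z) − u(z')| ≤ L(|z − z'| + ε) for all z, z' ∈ B_{3ε}(x). Then | (1/(2ε)) ∫₀^ε ( sup_{B_t(x)} u + inf_{B_t(x)} u ) dt − (1/(2ε)) ∫₀^ε ( sup_{B_t(y)} u + inf_{B_t(y)} u ) dt | ≤ 3 L |x − y|. -/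
/-!
Write `S_p(t)` and `I_p(t)` for the supremum and infimum of `u` over `B_t(p)`, and let
`d = |x - y|`. Moving the centre by `d` moves the radius by at most `d`:
`B_t(y) ⊆ B_{t+d}(x)` and `B_{t-d}(x) ⊆ B_t(y)`. Hence `∫₀^ε S_y - ∫₀^ε S_x` is at most
`∫_ε^{ε+d} S_x - ∫₀^d S_x`, and `∫₀^ε I_y - ∫₀^ε I_x` is at most `∫₀^d I_y - ∫_{ε-d}^ε I_x`.
Both are integrals over strips of width `d` on which, by the approximate Lipschitz bound, the
integrands differ from `u(x)` resp. `u(y)` by at most `L(2ε + d)`. So the difference of the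
two averages is at most `2Ld(2ε + d) / (2ε) ≤ 3Ld`, and the same holds with `x`, `y` swapped.
-/

open MeasureTheory Metric Set

theorem integral_le_integral_of_le_comp_add_right {f g : ℝ → ℝ} {a b d : ℝ} (hab : a ≤ b)
    (hg : IntervalIntegrable g volume a b)
    (hf : IntervalIntegrable (fun t => f (t + d)) volume a b)
    (h : ∀ t ∈ Ioo a b, g t ≤ f (t + d)) :
    ∫ t in a..b, g t ≤ ∫ t in (a + d)..(b + d), f t := by
  rw [← intervalIntegral.integral_comp_add_right]
  exact intervalIntegral.integral_mono_on_of_le_Ioo hab hg hf h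

section BallSupInf

variable {E : Type*} [PseudoMetricSpace E]

/- The centre is included so that these are monotone in `t` on all of `ℝ`: for `t ≤ 0` the ball
is empty and `sSup ∅ = sInf ∅ = 0`. For `t > 0` this changes nothing (`ballSup_eq_sSup`). -/
noncomputable def ballSup (u : E → ℝ) (p : E) (t : ℝ) : ℝ :=
  sSup (insert (u p) (u '' ball p t))

noncomputable def ballInf (u : E → ℝ) (p : E) (t : ℝ) : ℝ :=
  sInf (insert (u p) (u '' ball p t))

variable {u : E → ℝ} {p q : E} {s t c : ℝ}

theorem ballSup_eq_sSup (ht : 0 < t) : ballSup u p t = sSup (u '' ball p t) := by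
  rw [ballSup, insert_eq_of_mem (mem_image_of_mem u (mem_ball_self ht))]

theorem ballInf_eq_sInf (ht : 0 < t) : ballInf u p t = sInf (u '' ball p t) := by
  rw [ballInf, insert_eq_of_mem (mem_image_of_mem u (mem_ball_self ht))]

theorem bddAbove_insert_image_ball (hu : BddAbove (range u)) (p : E) (t : ℝ) :
    BddAbove (insert (u p) (u '' ball p t)) :=
  hu.mono (insert_subset (mem_range_self p) (image_subset_range u _))

theorem bddBelow_insert_image_ball (hu : BddBelow (range u)) (p : E) (t : ℝ) :
    BddBelow (insert (u p) (u '' ball p t)) :=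
  hu.mono (insert_subset (mem_range_self p) (image_subset_range u _))

theorem ballSup_monotone (hu : BddAbove (range u)) (p : E) : Monotone (ballSup u p) :=
  fun _ t hst => csSup_le_csSup (bddAbove_insert_image_ball hu p t) (insert_nonempty _ _)
    (insert_subset_insert (image_mono (ball_subset_ball hst)))

theorem ballInf_antitone (hu : BddBelow (range u)) (p : E) : Antitone (ballInf u p) :=
  fun _ t hst => csInf_le_csInf (bddBelow_insert_image_ball hu p t) (insert_nonempty _ _)
    (insert_subset_insert (image_mono (ball_subset_ball hst)))

theorem le_ballSup (hu : BddAbove (range u)) : u p ≤ ballSup u p t :=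
  le_csSup (bddAbove_insert_image_ball hu p t) (mem_insert _ _)

theorem ballInf_le (hu : BddBelow (range u)) : ballInf u p t ≤ u p :=
  csInf_le (bddBelow_insert_image_ball hu p t) (mem_insert _ _)

theorem ballSup_le (hp : u p ≤ c) (h : ∀ z ∈ ball p t, u z ≤ c) : ballSup u p t ≤ c :=
  csSup_le (insert_nonempty _ _) (forall_mem_insert.2 ⟨hp, forall_mem_image.2 h⟩)

theorem le_ballInf (hp : c ≤ u p) (h : ∀ z ∈ ball p t, c ≤ u z) : c ≤ ballInf u p t :=
  le_csInf (insert_nonempty _ _) (forall_mem_insert.2 ⟨hp, forall_mem_image.2 h⟩)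

theorem ballSup_le_ballSup (hu : BddAbove (range u)) (hq : q ∈ ball p t)
    (hs : ball q s ⊆ ball p t) : ballSup u q s ≤ ballSup u p t :=
  csSup_le_csSup (bddAbove_insert_image_ball hu p t) (insert_nonempty _ _)
    (insert_subset (mem_insert_of_mem _ (mem_image_of_mem u hq))
      ((image_mono hs).trans (subset_insert _ _)))

theorem ballInf_le_ballInf (hu : BddBelow (range u)) (hq : q ∈ ball p t)
    (hs : ball q s ⊆ ball p t) : ballInf u p t ≤ ballInf u q s :=
  csInf_le_csInf (bddBelow_insert_image_ball hu p t) (insert_nonempty _ _)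
    (insert_subset (mem_insert_of_mem _ (mem_image_of_mem u hq))
      ((image_mono hs).trans (subset_insert _ _)))

theorem integral_sSup_add_sInf_eq {ε : ℝ} (hε : 0 ≤ ε) :
    ∫ t in (0 : ℝ)..ε, (sSup (u '' ball p t) + sInf (u '' ball p t)) =
      ∫ t in (0 : ℝ)..ε, (ballSup u p t + ballInf u p t) := by
  refine intervalIntegral.integral_congr_ae (ae_of_all _ fun t ht => ?_)
  rw [uIoc_of_le hε] at ht
  rw [ballSup_eq_sSup ht.1, ballInf_eq_sInf ht.1]

theorem integral_ballSup_sub_le (hu : BddAbove (range u)) {ε : ℝ} (hε : 0 < ε)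
    (h : ∀ z ∈ ball p (ε + dist p q), u z ≤ u p + c) :
    (∫ t in (0 : ℝ)..ε, ballSup u q t) - ∫ t in (0 : ℝ)..ε, ballSup u p t ≤ dist p q * c := by
  set d := dist p q
  have hd : 0 ≤ d := dist_nonneg
  have hS := ballSup_monotone hu p
  have hc : 0 ≤ c := by linarith [h p (mem_ball_self (by positivity))]
  have shift : ∫ t in (0 : ℝ)..ε, ballSup u q t ≤ ∫ t in d..(ε + d), ballSup u p t := by
    simpa using integral_le_integral_of_le_comp_add_right hε.le
      (ballSup_monotone hu q).intervalIntegrable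
      (hS.comp (monotone_id.add_const d)).intervalIntegrable
      fun t ht => ballSup_le_ballSup hu (by rw [mem_ball, dist_comm]; linarith [ht.1])
        (ball_subset_ball' (by rw [dist_comm]))
  have split : (∫ t in (0 : ℝ)..d, ballSup u p t) + ∫ t in d..(ε + d), ballSup u p t =
      (∫ t in (0 : ℝ)..ε, ballSup u p t) + ∫ t in ε..(ε + d), ballSup u p t := by
    rw [intervalIntegral.integral_add_adjacent_intervals hS.intervalIntegrable
        hS.intervalIntegrable,
      intervalIntegral.integral_add_adjacent_intervals hS.intervalIntegrable
        hS.intervalIntegrable]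
  have lower : ∫ _ in (0 : ℝ)..d, u p ≤ ∫ t in (0 : ℝ)..d, ballSup u p t :=
    intervalIntegral.integral_mono hd intervalIntegrable_const hS.intervalIntegrable
      fun _ => le_ballSup hu
  have upper : ∫ t in ε..(ε + d), ballSup u p t ≤ ∫ _ in ε..(ε + d), (u p + c) :=
    intervalIntegral.integral_mono_on_of_le_Ioo (by linarith) hS.intervalIntegrable
      intervalIntegrable_const fun t ht =>
        ballSup_le (by linarith) fun z hz => h z (ball_subset_ball ht.2.le hz)
  simp only [intervalIntegral.integral_const, smul_eq_mul, sub_zero, add_sub_cancel_left]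
    at lower upper
  linarith

theorem integral_ballInf_sub_le (hu : BddBelow (range u)) {ε : ℝ} (hε : 0 < ε)
    (hd : dist p q ≤ ε) (h : ∀ z ∈ ball p ε, u q ≤ u z + c) :
    (∫ t in (0 : ℝ)..ε, ballInf u q t) - ∫ t in (0 : ℝ)..ε, ballInf u p t ≤ dist p q * c := by
  set d := dist p q
  have hd₀ : 0 ≤ d := dist_nonneg
  have hI := ballInf_antitone hu p
  have hIq := ballInf_antitone hu q
  have shift : ∫ t in d..ε, ballInf u q t ≤ ∫ t in (0 : ℝ)..(ε - d), ballInf u p t := by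
    simpa [← sub_eq_add_neg] using integral_le_integral_of_le_comp_add_right hd
      hIq.intervalIntegrable
      (hI.comp_monotone (monotone_id.add_const (-d))).intervalIntegrable
      fun t ht => ballInf_le_ballInf hu ht.1 (ball_subset_ball' (sub_add_cancel t d).le)
  have splitq : (∫ t in (0 : ℝ)..d, ballInf u q t) + ∫ t in d..ε, ballInf u q t =
      ∫ t in (0 : ℝ)..ε, ballInf u q t :=
    intervalIntegral.integral_add_adjacent_intervals hIq.intervalIntegrable hIq.intervalIntegrable
  have splitp : (∫ t in (0 : ℝ)..(ε - d), ballInf u p t) + ∫ t in (ε - d)..ε, ballInf u p t =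
      ∫ t in (0 : ℝ)..ε, ballInf u p t :=
    intervalIntegral.integral_add_adjacent_intervals hI.intervalIntegrable hI.intervalIntegrable
  have upper : ∫ t in (0 : ℝ)..d, ballInf u q t ≤ ∫ _ in (0 : ℝ)..d, u q :=
    intervalIntegral.integral_mono hd₀ hIq.intervalIntegrable intervalIntegrable_const
      fun _ => ballInf_le hu
  have lower : ∫ _ in (ε - d)..ε, (u q - c) ≤ ∫ t in (ε - d)..ε, ballInf u p t :=
    intervalIntegral.integral_mono_on_of_le_Ioo (by linarith)
      intervalIntegrable_const hI.intervalIntegrable fun t ht =>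
        le_ballInf (by linarith [h p (mem_ball_self hε)])
          fun z hz => by linarith [h z (ball_subset_ball ht.2.le hz)]
  simp only [intervalIntegral.integral_const, smul_eq_mul, sub_zero, sub_sub_cancel]
    at lower upper
  linarith

theorem integral_ballSup_add_ballInf_sub_le (hu₁ : BddAbove (range u))
    (hu₂ : BddBelow (range u)) {ε L : ℝ} (hε : 0 < ε) (hL : 0 ≤ L) (hd : dist p q ≤ ε)
    (H : ∀ z ∈ ball p (ε + dist p q), ∀ z' ∈ ball p (ε + dist p q),
      |u z - u z'| ≤ L * (dist z z' + ε)) :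
    (∫ t in (0 : ℝ)..ε, (ballSup u q t + ballInf u q t)) -
        ∫ t in (0 : ℝ)..ε, (ballSup u p t + ballInf u p t) ≤
      2 * L * dist p q * (2 * ε + dist p q) := by
  have hp : p ∈ ball p (ε + dist p q) := mem_ball_self (by positivity)
  have hq : q ∈ ball p (ε + dist p q) := by rw [mem_ball, dist_comm]; linarith
  have hsup := integral_ballSup_sub_le hu₁ hε (c := L * (2 * ε + dist p q)) fun z hz => by
    have := (abs_le.1 (H z hz p hp)).2
    nlinarith [mem_ball.1 hz]
  have hinf := integral_ballInf_sub_le hu₂ hε hd (c := L * (2 * ε + dist p q)) fun z hz => by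
    have := (abs_le.1 (H q hq z (ball_subset_ball (le_add_of_nonneg_right dist_nonneg) hz))).2
    nlinarith [mem_ball.1 hz, dist_triangle q p z, dist_comm p q, dist_comm p z]
  have hsplit (r : E) : ∫ t in (0 : ℝ)..ε, (ballSup u r t + ballInf u r t) =
      (∫ t in (0 : ℝ)..ε, ballSup u r t) + ∫ t in (0 : ℝ)..ε, ballInf u r t :=
    intervalIntegral.integral_add (ballSup_monotone hu₁ r).intervalIntegrable
      (ballInf_antitone hu₂ r).intervalIntegrable
  rw [hsplit, hsplit]
  linarith

end BallSupInf

theorem tug_of_war_cancellation_general (n : ℕ) (ε L : ℝ) (hε : 0 < ε) (hL : 0 ≤ L)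
    (x y : EuclideanSpace ℝ (Fin n)) (hxy : dist x y ≤ ε)
    (u : EuclideanSpace ℝ (Fin n) → ℝ)
    (hubdd : ∃ M, ∀ z, |u z| ≤ M)
    (hulip : ∀ z ∈ Metric.ball x (3 * ε), ∀ z' ∈ Metric.ball x (3 * ε),
      |u z - u z'| ≤ L * (dist z z' + ε)) :
    |(1 / (2 * ε)) *
        (∫ t in (0 : ℝ)..ε, (sSup (u '' Metric.ball x t) + sInf (u '' Metric.ball x t)))
      - (1 / (2 * ε)) *
        (∫ t in (0 : ℝ)..ε, (sSup (u '' Metric.ball y t) + sInf (u '' Metric.ball y t)))| ≤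
      3 * L * dist x y := by
  obtain ⟨M, hM⟩ := hubdd
  have hu₁ : BddAbove (range u) := ⟨M, forall_mem_range.2 fun z => (abs_le.1 (hM z)).2⟩
  have hu₂ : BddBelow (range u) := ⟨-M, forall_mem_range.2 fun z => (abs_le.1 (hM z)).1⟩
  have key (p q : EuclideanSpace ℝ (Fin n)) (hpq : dist p q ≤ ε)
      (hball : ball p (ε + dist p q) ⊆ ball x (3 * ε)) :=
    integral_ballSup_add_ballInf_sub_le hu₁ hu₂ hε hL hpq
      fun z hz z' hz' => hulip z (hball hz) z' (hball hz')
  have hyx : dist y x ≤ ε := dist_comm x y ▸ hxy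
  have hx := key x y hxy (ball_subset_ball (by linarith))
  have hy := key y x hyx (ball_subset_ball' (by linarith))
  rw [dist_comm y x] at hy
  rw [integral_sSup_add_sInf_eq hε.le, integral_sSup_add_sInf_eq hε.le, ← mul_sub, abs_mul,
    abs_of_pos (by positivity), one_div, inv_mul_le_iff₀ (by positivity)]
  have hslack := mul_nonneg (mul_nonneg hL (dist_nonneg : 0 ≤ dist x y)) (sub_nonneg.2 hxy)
  exact abs_sub_le_iff.2 ⟨by nlinarith, by nlinarith⟩

/-- **Cancellation estimate for the tug-of-war part.** Let `n ≥ 1`, `ε > 0`, `L ≥ 0`,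
`|x − y| ≤ ε`, and let `u` be bounded with `|u(z) − u(z')| ≤ L(|z − z'| + ε)` for all
`z, z' ∈ B_{3ε}(x)`. Then
`|(1/(2ε)) ∫₀^ε (sup_{B_t(x)} u + inf_{B_t(x)} u) dt −
  (1/(2ε)) ∫₀^ε (sup_{B_t(y)} u + inf_{B_t(y)} u) dt| ≤ 3 L |x − y|`. -/
theorem tug_of_war_cancellation (n : ℕ) (hn : 1 ≤ n) (ε L : ℝ) (hε : 0 < ε) (hL : 0 ≤ L)
    (x y : EuclideanSpace ℝ (Fin n)) (hxy : dist x y ≤ ε)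
    (u : EuclideanSpace ℝ (Fin n) → ℝ)
    (hubdd : ∃ M, ∀ z, |u z| ≤ M)
    (hulip : ∀ z ∈ Metric.ball x (3 * ε), ∀ z' ∈ Metric.ball x (3 * ε),
      |u z - u z'| ≤ L * (dist z z' + ε)) :
    |(1 / (2 * ε)) *
        (∫ t in (0 : ℝ)..ε, (sSup (u '' Metric.ball x t) + sInf (u '' Metric.ball x t)))
      - (1 / (2 * ε)) *
        (∫ t in (0 : ℝ)..ε, (sSup (u '' Metric.ball y t) + sInf (u '' Metric.ball y t)))| ≤
      3 * L * dist x y :=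
  tug_of_war_cancellation_general n ε L hε hL x y hxy u hubdd hulip
end

section
/- Second-order Taylor expansion of ball averages: let n ≥ 1, x ∈ ℝⁿ, ε > 0, M ≥ 0, and let φ : ℝⁿ → ℝ be three times continuously differentiable on an open set containing the closed ball of radius ε around x, with ‖D³φ(z)‖ ≤ M for all z in that closed ball. Then | ⨍_{B_ε(x)} φ(z) dz − φ(x) − (ε²/(2(n+2))) Δφ(x) | ≤ M ε³, where Δφ is the Laplacian of φ. -/
/-!
Translate the ball to the origin and Taylor-expand `φ (x + v)` to second order; the mean value
inequality along the segment `[x, x + v]` bounds the remainder by `M ε³ / 2`. Averaging the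
Taylor polynomial over `B_ε(0)`, the linear term vanishes by the symmetry `v ↦ -v`, and so do
the mixed moments `∫ vᵢ vⱼ` (`i ≠ j`), by reflecting the `i`-th coordinate. Permuting coordinates
shows that the moments `∫ vᵢ²` all agree, so each is `1/n` of `∫ ‖v‖²`, which polar coordinates
evaluate as `n / (n + 2) · ε² · |B_ε|`. The average of `D²φ(x)[v, v]` is therefore
`ε² / (n + 2) · Δφ(x)`.
-/

open MeasureTheory Metric Set

section Taylor

variable {E F : Type*} [NormedAddCommGroup E] [NormedSpace ℝ E] [NormedAddCommGroup F]
  [NormedSpace ℝ F] {φ : E → F} {x h : E}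

theorem hasDerivAt_iteratedFDeriv_apply_add_smul {k : ℕ} {t : ℝ}
    (hφ : ContDiffAt ℝ (k + 1) φ (x + t • h)) :
    HasDerivAt (fun s : ℝ => iteratedFDeriv ℝ k φ (x + s • h) (fun _ => h))
      (iteratedFDeriv ℝ (k + 1) φ (x + t • h) (fun _ => h)) t := by
  have hD : HasFDerivAt (iteratedFDeriv ℝ k φ)
      (fderiv ℝ (iteratedFDeriv ℝ k φ) (x + t • h)) (x + t • h) :=
    ((hφ.iteratedFDeriv_right (by rw [add_comm])).differentiableAt one_ne_zero).hasFDerivAt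
  have hline : HasDerivAt (fun s : ℝ => x + s • h) h t := by
    simpa using ((hasDerivAt_id t).smul_const h).const_add x
  exact (ContinuousMultilinearMap.apply ℝ (fun _ : Fin k => E) F (fun _ => h)).hasFDerivAt
    |>.comp_hasDerivAt t (hD.comp_hasDerivAt t hline)

/-- The mean value inequality only gives the constant `M / 2`, not the sharp `M / 6`. -/
theorem norm_sub_taylor_two_le {M : ℝ} (hφ : ∀ t ∈ Icc (0 : ℝ) 1, ContDiffAt ℝ 3 φ (x + t • h))
    (hD3 : ∀ t ∈ Icc (0 : ℝ) 1, ‖iteratedFDeriv ℝ 3 φ (x + t • h)‖ ≤ M) :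
    ‖φ (x + h) - (φ x + fderiv ℝ φ x h
      + (2 : ℝ)⁻¹ • iteratedFDeriv ℝ 2 φ x (fun _ => h))‖ ≤ M / 2 * ‖h‖ ^ 3 := by
  set G : ℕ → ℝ → F := fun k t => iteratedFDeriv ℝ k φ (x + t • h) (fun _ => h)
  have hG : ∀ k < 3, ∀ t ∈ Icc (0 : ℝ) 1, HasDerivAt (G k) (G (k + 1) t) t := fun k hk t ht =>
    hasDerivAt_iteratedFDeriv_apply_add_smul ((hφ t ht).of_le (by norm_cast))
  -- The Taylor polynomial at `x + t • h`, evaluated at `x + h`: in its derivative all terms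
  -- but the one involving `D³φ` telescope away.
  have hF : ∀ t ∈ Icc (0 : ℝ) 1, HasDerivAt
      (fun t => G 0 t + (1 - t) • G 1 t + ((1 - t) ^ 2 / 2) • G 2 t)
      (((1 - t) ^ 2 / 2) • G 3 t) t := by
    intro t ht
    have hl : HasDerivAt (fun s : ℝ => 1 - s) (-1) t := by
      simpa using (hasDerivAt_id t).const_sub 1
    convert ((hG 0 (by norm_num) t ht).add (hl.smul (hG 1 (by norm_num) t ht))).add
      (((hl.pow 2).div_const 2).smul (hG 2 (by norm_num) t ht)) using 1
    · rfl
    · simp only [Pi.pow_apply, Nat.reduceAdd, Nat.reduceSub, Nat.cast_ofNat, pow_one]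
      module
  have hF' : ∀ t ∈ Ico (0 : ℝ) 1, ‖((1 - t) ^ 2 / 2) • G 3 t‖ ≤ M / 2 * ‖h‖ ^ 3 := by
    intro t ht
    have hG3 : ‖G 3 t‖ ≤ M * ‖h‖ ^ 3 := by
      refine ((iteratedFDeriv ℝ 3 φ (x + t • h)).le_opNorm _).trans ?_
      simp only [Finset.prod_const, Finset.card_univ, Fintype.card_fin]
      gcongr
      exact hD3 t (Ico_subset_Icc_self ht)
    have ht' : (1 - t) ^ 2 / 2 ≤ 1 / 2 := by nlinarith [ht.1, ht.2]
    rw [norm_smul, Real.norm_of_nonneg (by positivity)]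
    calc (1 - t) ^ 2 / 2 * ‖G 3 t‖ ≤ 1 / 2 * (M * ‖h‖ ^ 3) := by gcongr
      _ = M / 2 * ‖h‖ ^ 3 := by ring
  have := norm_image_sub_le_of_norm_deriv_le_segment' (fun t ht => (hF t ht).hasDerivWithinAt)
    hF' 1 (right_mem_Icc.2 zero_le_one)
  simpa [G, iteratedFDeriv_one_apply] using this

theorem norm_sub_taylor_two_le_of_norm_le {U : Set E} {r M : ℝ} (hU : IsOpen U)
    (hrU : closedBall x r ⊆ U) (hφ : ContDiffOn ℝ 3 φ U)
    (hD3 : ∀ z ∈ closedBall x r, ‖iteratedFDeriv ℝ 3 φ z‖ ≤ M) (hh : ‖h‖ ≤ r) :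
    ‖φ (x + h) - (φ x + fderiv ℝ φ x h
      + (2 : ℝ)⁻¹ • iteratedFDeriv ℝ 2 φ x (fun _ => h))‖ ≤ M / 2 * ‖h‖ ^ 3 := by
  have hseg : ∀ t ∈ Icc (0 : ℝ) 1, x + t • h ∈ closedBall x r := fun t ht =>
    (convex_closedBall x r).add_smul_mem (mem_closedBall_self ((norm_nonneg h).trans hh))
      (by simpa using hh) ht
  exact norm_sub_taylor_two_le (fun t ht => hφ.contDiffAt (hU.mem_nhds (hrU (hseg t ht))))
    fun t ht => hD3 _ (hseg t ht)

end Taylor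

theorem norm_setAverage_sub_setAverage_le {α F : Type*} [MeasurableSpace α]
    [NormedAddCommGroup F] [NormedSpace ℝ F] {μ : Measure α} {s : Set α} {f g : α → F} {C : ℝ}
    (hs0 : μ s ≠ 0) (hs : μ s ≠ ⊤) (hf : IntegrableOn f s μ) (hg : IntegrableOn g s μ)
    (hfg : ∀ a ∈ s, ‖f a - g a‖ ≤ C) :
    ‖⨍ a in s, f a ∂μ - ⨍ a in s, g a ∂μ‖ ≤ C := by
  have hs0' : μ.real s ≠ 0 := (measureReal_ne_zero_iff hs).2 hs0
  rw [setAverage_eq, setAverage_eq, ← smul_sub, ← integral_sub hf hg, norm_smul,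
    Real.norm_of_nonneg (inv_nonneg.2 measureReal_nonneg)]
  calc (μ.real s)⁻¹ * ‖∫ a in s, f a - g a ∂μ‖ ≤ (μ.real s)⁻¹ * (C * μ.real s) := by
        gcongr
        exact norm_setIntegral_le_of_norm_le_const hs.lt_top hfg
    _ = C := by field_simp

section BallIntegrals

variable {E F : Type*} [NormedAddCommGroup E] [NormedAddCommGroup F]

theorem ContinuousOn.integrableOn_ball [MeasurableSpace E] [OpensMeasurableSpace E]
    [ProperSpace E] {μ : Measure E} [IsFiniteMeasureOnCompacts μ] {f : E → F} {x : E} {r : ℝ}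
    (hf : ContinuousOn f (closedBall x r)) : IntegrableOn f (ball x r) μ :=
  (hf.integrableOn_compact (isCompact_closedBall x r)).mono_set ball_subset_closedBall

variable [NormedSpace ℝ F]

theorem setAverage_ball_eq_setAverage_ball_zero [MeasurableSpace E] [BorelSpace E]
    (μ : Measure E) [μ.IsAddLeftInvariant] (f : E → F) (x : E) (r : ℝ) :
    ⨍ z in ball x r, f z ∂μ = ⨍ v in ball 0 r, f (x + v) ∂μ := by
  have hpre : (x + ·) ⁻¹' ball x r = ball 0 r := by
    ext v
    simp [dist_eq_norm]
  have hμ := measurePreserving_add_left μ x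
  rw [setAverage_eq, setAverage_eq, ← hpre, measureReal_def, measureReal_def,
    hμ.measure_preimage measurableSet_ball.nullMeasurableSet,
    hμ.setIntegral_preimage_emb (measurableEmbedding_addLeft x)]

variable [InnerProductSpace ℝ E] [FiniteDimensional ℝ E] [MeasurableSpace E] [BorelSpace E]

theorem LinearIsometryEquiv.setIntegral_ball_zero_comp (e : E ≃ₗᵢ[ℝ] E) (g : E → F) (r : ℝ) :
    ∫ v in ball 0 r, g (e v) = ∫ v in ball 0 r, g v := by
  have hpre : e ⁻¹' ball 0 r = ball 0 r := by
    ext v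
    simp
  conv_lhs => rw [← hpre]
  exact e.measurePreserving.setIntegral_preimage_emb e.toHomeomorph.measurableEmbedding g _

theorem setIntegral_ball_zero_eq_zero_of_comp_eq_neg (e : E ≃ₗᵢ[ℝ] E) {g : E → F}
    (hg : ∀ v, g (e v) = -g v) (r : ℝ) : ∫ v in ball 0 r, g v = 0 := by
  have := e.setIntegral_ball_zero_comp g r
  simp only [hg, integral_neg] at this
  linear_combination (norm := module) (-2⁻¹ : ℝ) • this

theorem ContinuousLinearMap.setIntegral_ball_zero (L : E →L[ℝ] F) (r : ℝ) :
    ∫ v in ball 0 r, L v = 0 :=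
  setIntegral_ball_zero_eq_zero_of_comp_eq_neg (LinearIsometryEquiv.neg ℝ) (by simp) r

end BallIntegrals

theorem setIntegral_ball_zero_norm_sq {E : Type*} [NormedAddCommGroup E] [NormedSpace ℝ E]
    [FiniteDimensional ℝ E] [Nontrivial E] [MeasurableSpace E] [BorelSpace E]
    (μ : Measure E) [μ.IsAddHaarMeasure] {r : ℝ} (hr : 0 ≤ r) :
    ∫ v in ball 0 r, ‖v‖ ^ 2 ∂μ =
      Module.finrank ℝ E / (Module.finrank ℝ E + 2) * r ^ 2 * μ.real (ball 0 r) := by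
  set d := Module.finrank ℝ E
  have hd : 1 ≤ d := Module.finrank_pos
  have hball : ∀ v : E,
      (ball (0 : E) r).indicator (‖·‖ ^ 2) v = (Iio r).indicator (· ^ 2) ‖v‖ := by
    intro v
    by_cases hv : ‖v‖ < r <;> simp [indicator, hv]
  have hradial : ∀ y ∈ Ioi (0 : ℝ), y ^ (d - 1) • (Iio r).indicator (· ^ 2) y =
      (Iio r).indicator (· ^ (d + 1)) y := by
    intro y _
    by_cases hy : y < r
    · simp only [indicator, mem_Iio, hy, if_true, smul_eq_mul, ← pow_add]
      congr 1
      omega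
    · simp [indicator, hy]
  have hIoo : ∫ y in Ioo 0 r, y ^ (d + 1) = r ^ (d + 2) / (d + 2) := by
    rw [← integral_Ioc_eq_integral_Ioo, ← intervalIntegral.integral_of_le hr, integral_pow]
    push_cast
    ring
  rw [← integral_indicator measurableSet_ball, funext hball, integral_fun_norm_addHaar,
    setIntegral_congr_fun measurableSet_Ioi hradial, integral_indicator measurableSet_Iio,
    Measure.restrict_restrict measurableSet_Iio, Iio_inter_Ioi, hIoo, measureReal_def,
    measureReal_def, μ.addHaar_ball 0 hr, ENNReal.toReal_mul,
    ENNReal.toReal_ofReal (by positivity), nsmul_eq_mul, smul_eq_mul]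
  field_simp
  ring

section EuclideanSpace

variable {ι F : Type*} [Fintype ι] [NormedAddCommGroup F] [NormedSpace ℝ F]

theorem setIntegral_ball_zero_sq_apply_eq (i j : ι) (r : ℝ) :
    ∫ v in ball (0 : EuclideanSpace ℝ ι) r, v i ^ 2 =
      ∫ v in ball (0 : EuclideanSpace ℝ ι) r, v j ^ 2 := by
  classical
  simpa using (LinearIsometryEquiv.piLpCongrLeft 2 ℝ ℝ (Equiv.swap i j)).setIntegral_ball_zero_comp
    (fun v : EuclideanSpace ℝ ι => v j ^ 2) r

theorem setIntegral_ball_zero_apply_mul_apply_of_ne {i j : ι} (hij : i ≠ j) (r : ℝ) :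
    ∫ v in ball (0 : EuclideanSpace ℝ ι) r, v i * v j = 0 := by
  classical
  let e : EuclideanSpace ℝ ι ≃ₗᵢ[ℝ] EuclideanSpace ℝ ι := LinearIsometryEquiv.piLpCongrRight 2
    fun k => if k = i then LinearIsometryEquiv.neg ℝ else LinearIsometryEquiv.refl ℝ ℝ
  refine setIntegral_ball_zero_eq_zero_of_comp_eq_neg e (fun v => ?_) r
  simp [e, apply_ite, hij.symm]

theorem setIntegral_ball_zero_sq_apply (i : ι) {r : ℝ} (hr : 0 ≤ r) :
    ∫ v in ball (0 : EuclideanSpace ℝ ι) r, v i ^ 2 =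
      r ^ 2 / (Fintype.card ι + 2) * volume.real (ball (0 : EuclideanSpace ℝ ι) r) := by
  have : Nonempty ι := ⟨i⟩
  have hsum : ∑ j : ι, ∫ v in ball (0 : EuclideanSpace ℝ ι) r, v j ^ 2 =
      ∫ v in ball (0 : EuclideanSpace ℝ ι) r, ‖v‖ ^ 2 := by
    rw [← integral_finsetSum _ fun j _ => ?_]
    · simp [EuclideanSpace.norm_sq_eq]
    · exact ((EuclideanSpace.proj j).continuous.pow 2).continuousOn.integrableOn_ball
  rw [Finset.sum_congr rfl fun j _ => setIntegral_ball_zero_sq_apply_eq j i r,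
    setIntegral_ball_zero_norm_sq volume hr, finrank_euclideanSpace, Finset.sum_const,
    Finset.card_univ, nsmul_eq_mul] at hsum
  have hcard : (Fintype.card ι : ℝ) ≠ 0 := Nat.cast_ne_zero.2 Fintype.card_ne_zero
  field_simp at hsum ⊢
  linarith

variable [DecidableEq ι]

theorem setIntegral_ball_zero_apply_mul_apply (i j : ι) {r : ℝ} (hr : 0 ≤ r) :
    ∫ v in ball (0 : EuclideanSpace ℝ ι) r, v i * v j =
      if i = j then r ^ 2 / (Fintype.card ι + 2) * volume.real (ball (0 : EuclideanSpace ℝ ι) r)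
      else 0 := by
  split_ifs with hij
  · simpa [hij, sq] using setIntegral_ball_zero_sq_apply j hr
  · exact setIntegral_ball_zero_apply_mul_apply_of_ne hij r

theorem ContinuousMultilinearMap.apply_diag_eq_sum
    (B : ContinuousMultilinearMap ℝ (fun _ : Fin 2 => EuclideanSpace ℝ ι) F)
    (v : EuclideanSpace ℝ ι) :
    B (fun _ => v) = ∑ i, ∑ j, (v i * v j) •
      B ![EuclideanSpace.single i 1, EuclideanSpace.single j 1] := by
  conv_lhs => rw [← (EuclideanSpace.basisFun ι ℝ).sum_repr v]
  rw [B.map_sum, ← Fintype.sum_prod_type', ← (piFinTwoEquiv fun _ => ι).symm.sum_comp]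
  refine Fintype.sum_congr _ _ fun p => ?_
  rw [B.map_smul_univ, Fin.prod_univ_two]
  congr 2
  funext k
  fin_cases k <;> simp

variable [CompleteSpace F]

theorem ContinuousMultilinearMap.setIntegral_ball_zero_apply_diag
    (B : ContinuousMultilinearMap ℝ (fun _ : Fin 2 => EuclideanSpace ℝ ι) F) {r : ℝ}
    (hr : 0 ≤ r) :
    ∫ v in ball (0 : EuclideanSpace ℝ ι) r, B (fun _ => v) =
      (r ^ 2 / (Fintype.card ι + 2) * volume.real (ball (0 : EuclideanSpace ℝ ι) r)) •
        ∑ i, B (fun _ => EuclideanSpace.single i 1) := by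
  have hint : ∀ i j : ι, IntegrableOn (fun v : EuclideanSpace ℝ ι => v i * v j)
      (ball 0 r) := fun i j =>
    ((EuclideanSpace.proj i).continuous.mul (EuclideanSpace.proj j).continuous).continuousOn
      |>.integrableOn_ball
  calc ∫ v in ball (0 : EuclideanSpace ℝ ι) r, B (fun _ => v)
      = ∑ i, ∑ j, (∫ v in ball (0 : EuclideanSpace ℝ ι) r, v i * v j) •
          B ![EuclideanSpace.single i 1, EuclideanSpace.single j 1] := by
        simp_rw [B.apply_diag_eq_sum]
        rw [integral_finsetSum _ fun i _ => integrable_finsetSum _ fun j _ =>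
          (hint i j).smul_const _]
        refine Fintype.sum_congr _ _ fun i => ?_
        rw [integral_finsetSum _ fun j _ => (hint i j).smul_const _]
        simp_rw [integral_smul_const]
    _ = _ := by
        simp_rw [setIntegral_ball_zero_apply_mul_apply _ _ hr, ite_smul, zero_smul,
          Finset.sum_ite_eq, Finset.mem_univ, if_true, Finset.smul_sum]
        congr! 3 with i
        funext k
        fin_cases k <;> rfl

theorem setAverage_ball_zero_taylor_two_poly (a : F) (L : EuclideanSpace ℝ ι →L[ℝ] F)
    (B : ContinuousMultilinearMap ℝ (fun _ : Fin 2 => EuclideanSpace ℝ ι) F) {r : ℝ}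
    (hr : 0 < r) :
    ⨍ v in ball (0 : EuclideanSpace ℝ ι) r, (a + L v + (2 : ℝ)⁻¹ • B (fun _ => v)) =
      a + (r ^ 2 / (2 * (Fintype.card ι + 2))) • ∑ i, B (fun _ => EuclideanSpace.single i 1) := by
  have hvol : volume.real (ball (0 : EuclideanSpace ℝ ι) r) ≠ 0 :=
    (measureReal_ne_zero_iff measure_ball_lt_top.ne).2 (measure_ball_pos _ _ hr).ne'
  have ha : IntegrableOn (fun _ => a) (ball (0 : EuclideanSpace ℝ ι) r) :=
    continuousOn_const.integrableOn_ball
  have hL : IntegrableOn (fun v => L v) (ball (0 : EuclideanSpace ℝ ι) r) :=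
    L.continuous.continuousOn.integrableOn_ball
  have hB : IntegrableOn (fun v => (2 : ℝ)⁻¹ • B (fun _ => v))
      (ball (0 : EuclideanSpace ℝ ι) r) :=
    (continuous_const.smul (B.coe_continuous.comp (continuous_pi fun _ => continuous_id)))
      |>.continuousOn.integrableOn_ball
  rw [setAverage_eq, integral_add (f := fun v => a + L v) (ha.add hL) hB, integral_add ha hL,
    integral_smul, L.setIntegral_ball_zero, B.setIntegral_ball_zero_apply_diag hr.le,
    setIntegral_const]
  simp only [smul_add, add_zero, smul_smul, inv_mul_cancel₀ hvol, one_smul]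
  congr 2
  field_simp

end EuclideanSpace

theorem ball_average_taylor_expansion_general (n : ℕ)
    (x : EuclideanSpace ℝ (Fin n)) (ε M : ℝ) (hε : 0 < ε) (hM : 0 ≤ M)
    (φ : EuclideanSpace ℝ (Fin n) → ℝ)
    (U : Set (EuclideanSpace ℝ (Fin n))) (hU : IsOpen U)
    (hUball : Metric.closedBall x ε ⊆ U)
    (hφ : ContDiffOn ℝ 3 φ U)
    (hD3 : ∀ z ∈ Metric.closedBall x ε, ‖iteratedFDeriv ℝ 3 φ z‖ ≤ M) :
    |(⨍ z in Metric.ball x ε, φ z) - φ x -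
        (ε ^ 2 / (2 * (n + 2))) *
          ∑ i : Fin n,
            iteratedFDeriv ℝ 2 φ x (fun _ => EuclideanSpace.single i (1 : ℝ))| ≤
      M * ε ^ 3 := by
  set P : EuclideanSpace ℝ (Fin n) → ℝ := fun v =>
    φ x + fderiv ℝ φ x v + (2 : ℝ)⁻¹ • iteratedFDeriv ℝ 2 φ x (fun _ => v)
  have hremainder : ∀ v ∈ ball (0 : EuclideanSpace ℝ (Fin n)) ε,
      ‖φ (x + v) - P v‖ ≤ M / 2 * ε ^ 3 := fun v hv =>
    have hvε : ‖v‖ ≤ ε := (mem_ball_zero_iff.1 hv).le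
    (norm_sub_taylor_two_le_of_norm_le hU hUball hφ hD3 hvε).trans (by gcongr)
  have hφint : IntegrableOn (fun v => φ (x + v)) (ball (0 : EuclideanSpace ℝ (Fin n)) ε) :=
    (hφ.continuousOn.comp (continuous_const_add x).continuousOn
      fun v hv => hUball (by simpa using hv)).integrableOn_ball
  have hPint : IntegrableOn P (ball (0 : EuclideanSpace ℝ (Fin n)) ε) :=
    Continuous.continuousOn (by fun_prop) |>.integrableOn_ball
  have hP := setAverage_ball_zero_taylor_two_poly (φ x) (fderiv ℝ φ x) (iteratedFDeriv ℝ 2 φ x) hε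
  rw [Fintype.card_fin, smul_eq_mul] at hP
  rw [setAverage_ball_eq_setAverage_ball_zero, sub_sub, ← hP, ← Real.norm_eq_abs]
  calc _ ≤ M / 2 * ε ^ 3 := norm_setAverage_sub_setAverage_le (measure_ball_pos _ _ hε).ne'
        measure_ball_lt_top.ne hφint hPint hremainder
    _ ≤ M * ε ^ 3 := by gcongr; linarith

/-- **Second-order Taylor expansion of ball averages.** Let `φ` be `C³` on an open set
containing the closed ball `B̄_ε(x)` with `‖D³φ‖ ≤ M` there. Then
`|⨍_{B_ε(x)} φ − φ(x) − (ε²/(2(n+2))) Δφ(x)| ≤ M ε³`, where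
`Δφ(x) = Σᵢ D²φ(x)[eᵢ, eᵢ]` is the Laplacian. -/
theorem ball_average_taylor_expansion (n : ℕ) (hn : 1 ≤ n)
    (x : EuclideanSpace ℝ (Fin n)) (ε M : ℝ) (hε : 0 < ε) (hM : 0 ≤ M)
    (φ : EuclideanSpace ℝ (Fin n) → ℝ)
    (U : Set (EuclideanSpace ℝ (Fin n))) (hU : IsOpen U)
    (hUball : Metric.closedBall x ε ⊆ U)
    (hφ : ContDiffOn ℝ 3 φ U)
    (hD3 : ∀ z ∈ Metric.closedBall x ε, ‖iteratedFDeriv ℝ 3 φ z‖ ≤ M) :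
    |(⨍ z in Metric.ball x ε, φ z) - φ x -
        (ε ^ 2 / (2 * (n + 2))) *
          ∑ i : Fin n,
            iteratedFDeriv ℝ 2 φ x (fun _ => EuclideanSpace.single i (1 : ℝ))| ≤
      M * ε ^ 3 :=
  ball_average_taylor_expansion_general n x ε M hε hM φ U hU hUball hφ hD3
end
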